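/- arXiv:math/0309108 — 5 statements merged into one kernel-verified Lean document; each statement's English description precedes it below -/
import Mathlib

section
/- For every positive integer n, ∑_{λ∈L_n} x^{|λ_o|} y^{|λ_e|} = ∏_{i=1}^{n} 1/(1 − x^i y^{i−1}) as formal power series in the two variables x and y. -/
/-!
Both sides count the same objects. Expanding the product, the coefficient of `x ^ a * y ^ b`
counts multiplicity vectors `m` with `∑ (i + 1) m_i = a` and `∑ i m_i = b`. A lecture hall
sequence `x :: t` (with `t` lecture hall) only constrains `x` from below, by `minHead t`, so it is
encoded by `x - minHead t` followed by the code of `t`. Dropping the first part exchanges odd and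
even positions, which breaks the bookkeeping of `|λ_o|` and `|λ_e|`. It is repaired by encoding
`reflect t` instead of `t`: the involution `reflect` mirrors each entry in an odd position inside
the interval of values that the lecture hall condition allows for it. It preserves the lecture
hall property and the odd-position sum, and moves the even-position sum to exactly the value that
makes the weights of the code match `(|λ_o|, |λ_e|)`.
-/

open MvPowerSeries

lemma Nat.mul_div_succ_add_ceil_div (L x : ℕ) : L * x / (L + 1) + (x + L) / (L + 1) = x := by
  have h1 := Nat.div_add_mod (L * x) (L + 1)
  have h2 := Nat.div_add_mod (x + L) (L + 1)
  have h3 := Nat.mod_lt (L * x) (Nat.succ_pos L)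
  have h4 := Nat.mod_lt (x + L) (Nat.succ_pos L)
  set a := L * x / (L + 1)
  set b := (x + L) / (L + 1)
  set r1 := L * x % (L + 1)
  set r2 := (x + L) % (L + 1)
  apply le_antisymm
  · by_contra! h
    nlinarith
  · by_contra! h
    nlinarith

def List.ofFnSubtypeEquiv {α : Type*} (p : List α → Prop) (n : ℕ) :
    {f : Fin n → α // p (List.ofFn f)} ≃ {l : List α // l.length = n ∧ p l} :=
  let e : (Fin n → α) ≃ {l : List α // l.length = n} := (Equiv.vectorEquivFin α n).symm
  (e.subtypeEquiv (q := fun l => p l.1) fun f =>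
    Iff.of_eq (congrArg p (List.Vector.toList_ofFn f).symm)).trans
    (Equiv.subtypeSubtypeEquivSubtypeInter _ p)

namespace LectureHall

section Multiplicities

variable {σ : Type*} (v : ℕ → σ →₀ ℕ)

abbrev Multiplicities (n : ℕ) (d : σ →₀ ℕ) : Type :=
  {m : Fin n → ℕ // ∑ i, m i • v i = d}

lemma finite_multiplicities (hv : ∀ i, v i ≠ 0) (n : ℕ) (d : σ →₀ ℕ) :
    Finite (Multiplicities v n d) := by
  choose s hs using fun i => Finsupp.ne_iff.1 (hv i)
  refine Set.Finite.subset (Set.Finite.pi (t := fun i : Fin n => Set.Iic (d (s i)))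
    fun _ => Set.finite_Iic _) fun m hm i _ => ?_
  calc m i ≤ m i * v i (s i) := Nat.le_mul_of_pos_right _ (Nat.pos_of_ne_zero (hs i))
    _ = (m i • v i) (s i) := rfl
    _ ≤ d (s i) := by
      rw [← hm]
      exact Finset.single_le_sum (f := fun j => m j • v j) (fun _ _ => zero_le)
        (Finset.mem_univ i) (s i)

lemma sum_smul_eq_sum_init {n : ℕ} (m : Fin (n + 1) → ℕ) :
    ∑ i, m i • v i = ∑ i, Fin.init m i • v i + m (Fin.last n) • v n := by
  simp [Fin.sum_univ_castSucc, Fin.init]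

lemma sum_snoc_smul {n : ℕ} (m : Fin n → ℕ) (k : ℕ) :
    ∑ i : Fin (n + 1), Fin.snoc (α := fun _ => ℕ) m k i • v i = ∑ i, m i • v i + k • v n := by
  simp [Fin.sum_univ_castSucc]

def multiplicitiesLastEqZeroEquiv (n : ℕ) (d : σ →₀ ℕ) :
    {m : Multiplicities v (n + 1) d // m.1 (Fin.last n) = 0} ≃ Multiplicities v n d where
  toFun m := ⟨Fin.init m.1.1, by simpa [sum_smul_eq_sum_init, m.2] using m.1.2⟩
  invFun m := ⟨⟨Fin.snoc m.1 0, by simp [sum_snoc_smul, m.2]⟩, by simp⟩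
  left_inv m := by
    ext1; ext1
    conv_rhs => rw [← Fin.snoc_init_self m.1.1, m.2]
  right_inv m := by simp

def multiplicitiesLastNeZeroEquiv (n : ℕ) {d : σ →₀ ℕ} (hd : v n ≤ d) :
    {m : Multiplicities v (n + 1) d // m.1 (Fin.last n) ≠ 0} ≃ Multiplicities v (n + 1) (d - v n)
    where
  toFun m := ⟨Fin.snoc (Fin.init m.1.1) (m.1.1 (Fin.last n) - 1), by
    obtain ⟨k, hk⟩ := Nat.exists_eq_succ_of_ne_zero m.2
    have hm := m.1.2
    rw [sum_smul_eq_sum_init, hk, succ_nsmul, ← add_assoc] at hm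
    simp [sum_snoc_smul, hk, ← hm]⟩
  invFun m := ⟨⟨Fin.snoc (Fin.init m.1) (m.1 (Fin.last n) + 1), by
    rw [sum_snoc_smul, succ_nsmul, ← add_assoc, ← sum_smul_eq_sum_init, m.2,
      tsub_add_cancel_of_le hd]⟩, by simp⟩
  left_inv m := by
    ext1; ext1
    simp [Nat.sub_add_cancel (Nat.pos_of_ne_zero m.2)]
  right_inv m := by simp

lemma card_multiplicities_succ (hv : ∀ i, v i ≠ 0) (n : ℕ) (d : σ →₀ ℕ) :
    Nat.card (Multiplicities v (n + 1) d) = Nat.card (Multiplicities v n d) +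
      if v n ≤ d then Nat.card (Multiplicities v (n + 1) (d - v n)) else 0 := by
  have := finite_multiplicities v hv (n + 1) d
  rw [← Nat.card_congr (Equiv.sumCompl fun m : Multiplicities v (n + 1) d =>
    m.1 (Fin.last n) = 0), Nat.card_sum, Nat.card_congr (multiplicitiesLastEqZeroEquiv v n d)]
  split_ifs with hd
  · rw [Nat.card_congr (multiplicitiesLastNeZeroEquiv v n hd)]
  · have : IsEmpty {m : Multiplicities v (n + 1) d // m.1 (Fin.last n) ≠ 0} :=
      ⟨fun m => hd <| by
        obtain ⟨k, hk⟩ := Nat.exists_eq_succ_of_ne_zero m.2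
        rw [← m.1.2, sum_smul_eq_sum_init, hk, succ_nsmul]
        exact le_add_self.trans le_add_self⟩
    simp

lemma constantCoeff_one_sub_monomial {K : Type*} [Field K] {e : σ →₀ ℕ} (he : e ≠ 0) :
    constantCoeff (1 - monomial e (1 : K)) ≠ 0 := by
  classical
  rw [← coeff_zero_eq_constantCoeff_apply, map_sub, coeff_one, coeff_monomial, if_neg he.symm]
  simp

theorem coeff_prod_inv_one_sub_monomial {K : Type*} [Field K] (hv : ∀ i, v i ≠ 0) (n : ℕ)
    (d : σ →₀ ℕ) :
    coeff d (∏ i ∈ Finset.range n, (1 - monomial (v i) (1 : K))⁻¹) =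
      (Nat.card (Multiplicities v n d) : K) := by
  induction n generalizing d with
  | zero =>
    classical
    rw [Finset.prod_range_zero, coeff_one]
    split_ifs with hd <;> simp [Multiplicities, hd, eq_comm]
  | succ n ih =>
    let F : MvPowerSeries σ K := fun d => Nat.card (Multiplicities v (n + 1) d)
    suffices h : F = ∏ i ∈ Finset.range (n + 1), (1 - monomial (v i) (1 : K))⁻¹ by
      rw [← h, coeff_apply]
    rw [Finset.prod_range_succ, MvPowerSeries.eq_mul_inv_iff_mul_eq
      (constantCoeff_one_sub_monomial (hv n))]
    ext d
    -- the coefficients of `F * (1 - X ^ v n)` are `F d - F (d - v n)`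
    rw [ih, mul_sub, mul_one, map_sub, coeff_mul_monomial, coeff_apply, coeff_apply]
    simp only [F]
    rw [card_multiplicities_succ v hv n d]
    split_ifs <;> simp

end Multiplicities

/-- A list `l` of length `n` is lecture hall when `l[i] / (n - i)` is non-increasing; for
`x :: y :: t` the first step compares `x / (|t| + 2)` with `y / (|t| + 1)`. -/
def IsLectureHall : List ℕ → Prop
  | x :: y :: t => (t.length + 2) * y ≤ (t.length + 1) * x ∧ IsLectureHall (y :: t)
  | _ => True

/-- The least `x` with `x :: t` lecture hall: `⌈(L + 1) b / L⌉` for `t = b :: s` of length `L`. -/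
def minHead : List ℕ → ℕ
  | [] => 0
  | b :: s => ((s.length + 2) * b + s.length) / (s.length + 1)

lemma minHead_cons_le_iff {x b : ℕ} {s : List ℕ} :
    minHead (b :: s) ≤ x ↔ (s.length + 2) * b ≤ (s.length + 1) * x := by
  rw [minHead, Nat.div_le_iff_le_mul_add_pred (by omega)]
  omega

lemma isLectureHall_cons_iff {x : ℕ} {t : List ℕ} :
    IsLectureHall (x :: t) ↔ minHead t ≤ x ∧ IsLectureHall t := by
  cases t with
  | nil => simp [IsLectureHall, minHead]
  | cons b s => exact and_congr_left' minHead_cons_le_iff.symm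

lemma isLectureHall_cons_cons_iff {x y : ℕ} {t : List ℕ} :
    IsLectureHall (x :: y :: t) ↔
      y ≤ (t.length + 1) * x / (t.length + 2) ∧ minHead t ≤ y ∧ IsLectureHall t := by
  rw [isLectureHall_cons_iff, isLectureHall_cons_iff, minHead_cons_le_iff,
    Nat.le_div_iff_mul_le (Nat.succ_pos _), Nat.mul_comm y]

lemma minHead_cons_cons (x y : ℕ) (t : List ℕ) :
    minHead (x :: y :: t) = x + (x + (t.length + 1)) / (t.length + 2) := by
  rw [minHead, List.length_cons,
    show (t.length + 1 + 2) * x + (t.length + 1) = (t.length + 2) * x + (x + (t.length + 1)) by ring,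
    Nat.mul_add_div (Nat.succ_pos _)]

/-- Sum of the entries in even positions `0, 2, 4, …`, i.e. of the odd-indexed parts `λ_o`;
the parts `λ_e` of `l` are the parts `λ_o` of `l.tail`. -/
def oddSum : List ℕ → ℕ
  | [] => 0
  | [x] => x
  | x :: _ :: t => x + oddSum t

lemma oddSum_cons (x : ℕ) (t : List ℕ) : oddSum (x :: t) = x + oddSum t.tail := by
  cases t <;> simp [oddSum]

/-- On lecture hall lists, each entry in an odd position `y` (followed by `t`, preceded by `x`)
ranges over the interval `[minHead t, ⌊(|t| + 1) x / (|t| + 2)⌋]`; `reflect` mirrors all of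
them in their intervals. -/
def reflect : List ℕ → List ℕ
  | x :: y :: t => x :: ((t.length + 1) * x / (t.length + 2) + minHead t - y) :: reflect t
  | l => l

@[simp] lemma length_reflect (l : List ℕ) : (reflect l).length = l.length := by
  induction l using List.twoStepInduction <;> simp_all [reflect]

lemma minHead_reflect (l : List ℕ) : minHead (reflect l) = minHead l := by
  rcases l with _ | ⟨x, _ | ⟨y, t⟩⟩ <;> simp [reflect, minHead]

lemma oddSum_reflect (l : List ℕ) : oddSum (reflect l) = oddSum l := by
  induction l using List.twoStepInduction <;> simp_all [reflect, oddSum]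

lemma IsLectureHall.reflect {l : List ℕ} (h : IsLectureHall l) : IsLectureHall (reflect l) := by
  induction l using List.twoStepInduction with
  | nil | singleton => trivial
  | cons_cons x y t ih =>
    rw [isLectureHall_cons_cons_iff] at h
    rw [LectureHall.reflect, isLectureHall_cons_cons_iff, length_reflect, minHead_reflect]
    exact ⟨by omega, by omega, ih h.2.2⟩

lemma reflect_reflect {l : List ℕ} (h : IsLectureHall l) : reflect (reflect l) = l := by
  induction l using List.twoStepInduction with
  | nil | singleton => rfl
  | cons_cons x y t ih =>
    rw [isLectureHall_cons_cons_iff] at h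
    simp only [LectureHall.reflect, length_reflect, minHead_reflect, ih h.2.2]
    congr
    omega

/-- Each odd-position entry and its reflection add up to the sum of the interval's endpoints, and
`⌊L x / (L + 1)⌋ + ⌈x / (L + 1)⌉ = x` turns the total into twice the even-position sum. -/
lemma oddSum_tail_add_oddSum_tail_reflect {l : List ℕ} (h : IsLectureHall l) :
    oddSum l.tail + oddSum (reflect l).tail + minHead l = 2 * oddSum l := by
  induction l using List.twoStepInduction with
  | nil => rfl
  | singleton x => simp [oddSum, minHead, LectureHall.reflect]
  | cons_cons x y t ih =>
    rw [isLectureHall_cons_cons_iff] at h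
    have hx : (t.length + 1) * x / (t.length + 2) + (x + (t.length + 1)) / (t.length + 2) = x :=
      Nat.mul_div_succ_add_ceil_div _ x
    have ht := ih h.2.2
    simp only [LectureHall.reflect, List.tail_cons, oddSum_cons, minHead_cons_cons] at ht ⊢
    generalize (t.length + 1) * x / (t.length + 2) = D at h hx ⊢
    omega

/-- `weight m = ∑ i, (i + 1) * m[i]`, the `x`-degree of `∏ i, (x ^ (i + 1) * y ^ i) ^ m[i]`;
its `y`-degree is `weight m.tail`. -/
def weight : List ℕ → ℕ
  | [] => 0
  | x :: t => x + t.sum + weight t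

lemma sum_add_weight_tail (m : List ℕ) : m.sum + weight m.tail = weight m := by
  cases m <;> simp [weight, Nat.add_assoc]

def toMultiplicities : List ℕ → List ℕ
  | [] => []
  | x :: t => (x - minHead t) :: toMultiplicities (reflect t)
termination_by l => l.length

def ofMultiplicities : List ℕ → List ℕ
  | [] => []
  | k :: m => (k + minHead (reflect (ofMultiplicities m))) :: reflect (ofMultiplicities m)

@[simp] lemma length_toMultiplicities (l : List ℕ) : (toMultiplicities l).length = l.length := by
  induction l using toMultiplicities.induct <;> simp_all [toMultiplicities]

@[simp] lemma length_ofMultiplicities (m : List ℕ) : (ofMultiplicities m).length = m.length := by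
  induction m <;> simp_all [ofMultiplicities]

lemma isLectureHall_ofMultiplicities (m : List ℕ) : IsLectureHall (ofMultiplicities m) := by
  induction m with
  | nil => trivial
  | cons k m ih => exact isLectureHall_cons_iff.2 ⟨Nat.le_add_left _ _, ih.reflect⟩

lemma toMultiplicities_ofMultiplicities (m : List ℕ) :
    toMultiplicities (ofMultiplicities m) = m := by
  induction m with
  | nil => simp [ofMultiplicities, toMultiplicities]
  | cons k m ih =>
    rw [ofMultiplicities, toMultiplicities, reflect_reflect (isLectureHall_ofMultiplicities m), ih,
      Nat.add_sub_cancel]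

lemma ofMultiplicities_toMultiplicities {l : List ℕ} (h : IsLectureHall l) :
    ofMultiplicities (toMultiplicities l) = l := by
  induction l using toMultiplicities.induct with
  | case1 => simp [ofMultiplicities, toMultiplicities]
  | case2 x t ih =>
    rw [isLectureHall_cons_iff] at h
    rw [toMultiplicities, ofMultiplicities, ih h.2.reflect, reflect_reflect h.2,
      Nat.sub_add_cancel h.1]

lemma weight_toMultiplicities {l : List ℕ} (h : IsLectureHall l) :
    weight (toMultiplicities l) = oddSum l ∧ weight (toMultiplicities l).tail = oddSum l.tail := by
  induction l using toMultiplicities.induct with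
  | case1 => simp [toMultiplicities, weight, oddSum]
  | case2 x t ih =>
    rw [isLectureHall_cons_iff] at h
    obtain ⟨ih, ih_tail⟩ := ih h.2.reflect
    have hsum := sum_add_weight_tail (toMultiplicities (reflect t))
    have key := oddSum_tail_add_oddSum_tail_reflect h.2
    rw [ih, ih_tail, oddSum_reflect] at hsum
    rw [toMultiplicities, weight, List.tail_cons, oddSum_cons, List.tail_cons, ih, oddSum_reflect]
    omega

def lectureHallEquiv (n a b : ℕ) :
    {l : List ℕ // l.length = n ∧ IsLectureHall l ∧ oddSum l = a ∧ oddSum l.tail = b} ≃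
      {m : List ℕ // m.length = n ∧ weight m = a ∧ weight m.tail = b} where
  toFun l := ⟨toMultiplicities l, by
    obtain ⟨hn, hl, ha, hb⟩ := l.2
    simp [weight_toMultiplicities hl, hn, ha, hb]⟩
  invFun m := ⟨ofMultiplicities m, by
    have h := weight_toMultiplicities (isLectureHall_ofMultiplicities m.1)
    rw [toMultiplicities_ofMultiplicities] at h
    obtain ⟨hn, ha, hb⟩ := m.2
    exact ⟨by simp [hn], isLectureHall_ofMultiplicities m.1, h.1 ▸ ha, h.2 ▸ hb⟩⟩
  left_inv l := Subtype.ext (ofMultiplicities_toMultiplicities l.2.2.1)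
  right_inv m := Subtype.ext (toMultiplicities_ofMultiplicities m)

lemma isLectureHall_cons_iff_getElem {x : ℕ} {t : List ℕ} :
    IsLectureHall (x :: t) ↔
      (∀ h : 0 < t.length, (t.length + 1) * t[0] ≤ t.length * x) ∧ IsLectureHall t := by
  cases t <;> simp [IsLectureHall]

theorem isLectureHall_ofFn_iff {n : ℕ} (l : Fin n → ℕ) :
    IsLectureHall (List.ofFn l) ↔ ∀ i : Fin n, ∀ h : i.1 + 1 < n,
      ((n : ℤ) - i.1) * (l ⟨i.1 + 1, h⟩ : ℤ) ≤ ((n : ℤ) - 1 - i.1) * (l i : ℤ) := by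
  induction n with
  | zero => simp [IsLectureHall]
  | succ n ih =>
    rw [List.ofFn_succ, isLectureHall_cons_iff_getElem, ih, Fin.forall_fin_succ]
    simp only [List.length_ofFn, List.getElem_ofFn, Fin.succ_mk, zero_add, Fin.coe_ofNat_eq_mod,
      Nat.zero_mod, lt_add_iff_pos_left, Nat.cast_add, Nat.cast_one, CharP.cast_eq_zero, sub_zero,
      add_sub_cancel_right, Fin.val_succ, Order.lt_add_one_iff, Order.add_one_le_iff]
    exact and_congr (forall_congr' fun _ => by norm_cast) (forall₂_congr fun _ _ => by ring_nf)

lemma oddSum_ofFn {n : ℕ} (l : Fin n → ℕ) :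
    oddSum (List.ofFn l) = ∑ i with i.1 % 2 = 0, l i ∧
      oddSum (List.ofFn l).tail = ∑ i with i.1 % 2 = 1, l i := by
  induction n with
  | zero => simp [oddSum]
  | succ n ih =>
    obtain ⟨ih, ih_tail⟩ := ih (fun i => l i.succ)
    simp only [Finset.sum_filter] at ih ih_tail ⊢
    simp [List.ofFn_succ, oddSum_cons, Fin.sum_univ_succ, Nat.succ_mod_two_eq_zero_iff,
      Nat.succ_mod_two_eq_one_iff, ih, ih_tail]

lemma weight_ofFn {n : ℕ} (m : Fin n → ℕ) :
    weight (List.ofFn m) = ∑ i, (i.1 + 1) * m i ∧ weight (List.ofFn m).tail = ∑ i, i.1 * m i := by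
  induction n with
  | zero => simp [weight]
  | succ n ih =>
    simp only [List.ofFn_succ, weight, List.sum_ofFn, ih, add_mul, one_mul,
      Finset.sum_add_distrib, Fin.sum_univ_succ, Fin.coe_ofNat_eq_mod, Nat.zero_mod, zero_mul,
      Fin.val_succ, zero_add, List.tail_cons, and_true]
    ring

lemma sum_smul_single_add_single_eq_iff {n : ℕ} (m : Fin n → ℕ) (d : Fin 2 →₀ ℕ) :
    ∑ i, m i • (Finsupp.single 0 (i.1 + 1) + Finsupp.single 1 i.1) = d ↔
      ∑ i, (i.1 + 1) * m i = d 0 ∧ ∑ i, i.1 * m i = d 1 := by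
  simp only [Finsupp.ext_iff, Fin.forall_fin_two, Finsupp.finsetSum_apply, Finsupp.smul_apply,
    Finsupp.add_apply, smul_eq_mul]
  simp [mul_comm]

end LectureHall

open LectureHall in
theorem odd_even_lecture_hall_theorem_general (n : ℕ) (d : Fin 2 →₀ ℕ) :
    (Nat.card {l : Fin n → ℕ //
        (∀ i : Fin n, ∀ h : i.1 + 1 < n,
          ((n : ℤ) - i.1) * (l ⟨i.1 + 1, h⟩ : ℤ) ≤ ((n : ℤ) - 1 - i.1) * (l i : ℤ)) ∧
        (∑ i ∈ Finset.univ.filter (fun i : Fin n => i.1 % 2 = 0), l i) = d 0 ∧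
        (∑ i ∈ Finset.univ.filter (fun i : Fin n => i.1 % 2 = 1), l i) = d 1} : ℚ) =
      MvPowerSeries.coeff d
        (∏ i ∈ Finset.range n,
          (1 - (MvPowerSeries.X 0 : MvPowerSeries (Fin 2) ℚ) ^ (i + 1) *
            MvPowerSeries.X 1 ^ i)⁻¹) := by
  let v (i : ℕ) : Fin 2 →₀ ℕ := Finsupp.single 0 (i + 1) + Finsupp.single 1 i
  have hX (i : ℕ) : (1 - X 0 ^ (i + 1) * X 1 ^ i : MvPowerSeries (Fin 2) ℚ) =
      1 - monomial (v i) 1 := by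
    rw [X_pow_eq, X_pow_eq, monomial_mul_monomial, one_mul]
  have hv (i : ℕ) : v i ≠ 0 := by simp [v, Finsupp.ext_iff, Fin.forall_fin_two]
  simp only [hX, coeff_prod_inv_one_sub_monomial v hv, Nat.cast_inj]
  refine Nat.card_congr <|
    ((Equiv.subtypeEquivRight fun l => ?_).trans (List.ofFnSubtypeEquiv _ n)).trans <|
      (lectureHallEquiv n (d 0) (d 1)).trans <|
        (List.ofFnSubtypeEquiv _ n).symm.trans (Equiv.subtypeEquivRight fun m => ?_)
  · rw [isLectureHall_ofFn_iff, (oddSum_ofFn l).1, (oddSum_ofFn l).2]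
  · rw [(weight_ofFn m).1, (weight_ofFn m).2, sum_smul_single_add_single_eq_iff]

/-- **The Odd/Even Lecture Hall Theorem** (Bousquet-Mélou–Eriksson).
For `n ≥ 1`, `∑_{λ∈L_n} x^{|λ_o|} y^{|λ_e|} = ∏_{i=1}^{n} 1/(1 - x^i y^{i-1})`
as formal power series in `x = X 0` and `y = X 1`, stated coefficientwise:
`λ_o` is the subsequence of odd-indexed (1-indexed) parts and `λ_e` that of the
even-indexed parts. -/
theorem odd_even_lecture_hall_theorem (n : ℕ) (hn : 0 < n) (d : Fin 2 →₀ ℕ) :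
    (Nat.card {l : Fin n → ℕ //
        (∀ i : Fin n, ∀ h : i.1 + 1 < n,
          ((n : ℤ) - i.1) * (l ⟨i.1 + 1, h⟩ : ℤ) ≤ ((n : ℤ) - 1 - i.1) * (l i : ℤ)) ∧
        (∑ i ∈ Finset.univ.filter (fun i : Fin n => i.1 % 2 = 0), l i) = d 0 ∧
        (∑ i ∈ Finset.univ.filter (fun i : Fin n => i.1 % 2 = 1), l i) = d 1} : ℚ) =
      MvPowerSeries.coeff d
        (∏ i ∈ Finset.range n,
          (1 - (MvPowerSeries.X 0 : MvPowerSeries (Fin 2) ℚ) ^ (i + 1) *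
            MvPowerSeries.X 1 ^ i)⁻¹) :=
  odd_even_lecture_hall_theorem_general n d
end

section
/- For every positive integer n, ∑_{λ∈A_n} q^{|λ|} = (−q;q)_n/(q²;q)_n as formal power series in q; equivalently, for every nonnegative integer N, the number of λ ∈ A_n with |λ| = N equals the coefficient of q^N in ∏_{i=1}^{n} (1 + q^i)/(1 − q^{i+1}). -/
/-! Let `F m r` be the generating function of anti-lecture hall compositions with `m + 1` parts
whose last part is at least `r`. For `r ≤ m + 1`, removing a last part equal to `r` leaves a
composition whose last part is at least `r`, so `F (m+1) r = q^r F m r + F (m+1) (r+1)`; and when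
the last part is at least `m + 1`, every part `λᵢ` is at least `i`, so subtracting the staircase
`(1, 2, …, m+1)` gives `F m (m+1) = q^((m+1)(m+2)/2) F m 0`. Since `1 - q^((m+2)(m+3)/2)` is not a
zero divisor, these relations determine `F (m+1)` from `F m`, and they are satisfied by
`q^(m+1 + m + ⋯ + (m+2-r)) (-q;q)_r (-q;q)_(m+1-r) / (q²;q)_(m+1)`. At `r = 0` this is the
theorem. -/

namespace AntiLectureHall

open Finset PowerSeries

-- `l i` is the part `λ_(i+1)`.
def IsAntiLectureHall {m : ℕ} (l : Fin (m + 1) → ℕ) : Prop :=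
  ∀ i : Fin m, (i + 1 : ℕ) * l i.succ ≤ (i + 2) * l i.castSucc

instance {m : ℕ} : DecidablePred (IsAntiLectureHall (m := m)) :=
  fun _ => inferInstanceAs (Decidable (∀ _ : Fin m, _))

theorem isAntiLectureHall_iff {m : ℕ} (l : Fin (m + 1) → ℕ) :
    IsAntiLectureHall l ↔ ∀ i : Fin (m + 1), ∀ h : i.1 + 1 < m + 1,
      ((i.1 : ℤ) + 1) * (l ⟨i.1 + 1, h⟩ : ℤ) ≤ ((i.1 : ℤ) + 2) * (l i : ℤ) := by
  constructor
  · intro hl i h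
    exact_mod_cast hl ⟨i, by omega⟩
  · intro hl i
    exact_mod_cast hl i.castSucc (by simp)

theorem isAntiLectureHall_snoc_iff {m : ℕ} (p : Fin (m + 1) → ℕ) {x : ℕ}
    (hx : x ≤ m + 1) :
    IsAntiLectureHall (Fin.snoc p x : Fin (m + 2) → ℕ) ↔
      IsAntiLectureHall p ∧ x ≤ p (Fin.last m) := by
  simp only [IsAntiLectureHall, Fin.forall_fin_succ' (P := fun i : Fin (m + 1) => _ ≤ _),
    Fin.val_castSucc, Fin.succ_castSucc, Fin.snoc_castSucc, Fin.succ_last, Fin.snoc_last,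
    Fin.val_last]
  exact and_congr Iff.rfl ⟨fun h => by nlinarith, fun h => by nlinarith⟩

theorem IsAntiLectureHall.succ_le {m : ℕ} {l : Fin (m + 1) → ℕ} (hl : IsAntiLectureHall l)
    (hlast : m + 1 ≤ l (Fin.last m)) (i : Fin (m + 1)) : i.1 + 1 ≤ l i := by
  induction i using Fin.reverseInduction with
  | last => exact hlast
  | cast i ih =>
    have := hl i
    simp only [Fin.val_succ, Fin.val_castSucc] at ih ⊢
    nlinarith

theorem isAntiLectureHall_add_staircase_iff {m : ℕ} (p : Fin (m + 1) → ℕ) :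
    IsAntiLectureHall (fun i => p i + (i.1 + 1)) ↔ IsAntiLectureHall p := by
  refine forall_congr' fun i => ?_
  simp only [Fin.val_succ, Fin.val_castSucc]
  constructor <;> intro h <;> nlinarith

noncomputable def alhFinset (m w r : ℕ) : Finset (Fin (m + 1) → ℕ) :=
  {l ∈ Fintype.piFinset fun _ => range (w + 1) |
    IsAntiLectureHall l ∧ ∑ i, l i = w ∧ r ≤ l (Fin.last m)}

theorem mem_alhFinset {m w r : ℕ} {l : Fin (m + 1) → ℕ} :
    l ∈ alhFinset m w r ↔ IsAntiLectureHall l ∧ ∑ i, l i = w ∧ r ≤ l (Fin.last m) := by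
  refine ⟨fun h => (mem_filter.1 h).2, fun h => mem_filter.2 ⟨?_, h⟩⟩
  refine Fintype.mem_piFinset.2 fun i => mem_range.2 (Nat.lt_succ_of_le ?_)
  exact h.2.1 ▸ single_le_sum (fun _ _ => Nat.zero_le _) (mem_univ i)

theorem card_alhFinset_zero (w r : ℕ) : #(alhFinset 0 w r) = if r ≤ w then 1 else 0 := by
  have : alhFinset 0 w r = if r ≤ w then {fun _ => w} else ∅ := by
    ext l
    simp only [mem_alhFinset, IsAntiLectureHall, IsEmpty.forall_iff, Fin.sum_univ_succ,
      Fin.sum_univ_zero, add_zero, true_and, Fin.last_zero]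
    split_ifs with h
    · rw [mem_singleton, funext_iff, Fin.forall_fin_one]
      omega
    · simp only [notMem_empty, iff_false]
      omega
  split_ifs at this ⊢ <;> simp [this]

theorem card_alhFinset_eq_card_filter_add (m w r : ℕ) :
    #(alhFinset m w r) =
      #{l ∈ alhFinset m w r | l (Fin.last m) = r} + #(alhFinset m w (r + 1)) := by
  rw [← card_filter_add_card_filter_not (fun l => l (Fin.last m) = r)]
  congr 2
  ext l
  simp only [mem_filter, mem_alhFinset, and_assoc]
  exact and_congr_right fun _ => and_congr_right fun _ => by omega

theorem card_filter_last_eq (m w r : ℕ) (hr : r ≤ m + 1) :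
    #{l ∈ alhFinset (m + 1) w r | l (Fin.last (m + 1)) = r} =
      if r ≤ w then #(alhFinset m (w - r) r) else 0 := by
  split_ifs with hw
  · refine (card_nbij' Fin.init (fun p => Fin.snoc p r) ?_ ?_ ?_ ?_).trans rfl
    · intro l hl
      simp only [coe_filter, Set.mem_ofPred_eq, mem_alhFinset] at hl
      obtain ⟨⟨hal, hsum, -⟩, hlast⟩ := hl
      rw [← Fin.snoc_init_self l, hlast, isAntiLectureHall_snoc_iff _ hr] at hal
      rw [Fin.sum_univ_castSucc, hlast] at hsum
      exact mem_alhFinset.2 ⟨hal.1, by simp only [Fin.init] at hsum ⊢; omega, hal.2⟩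
    · intro p hp
      obtain ⟨hal, hsum, hlast⟩ := mem_alhFinset.1 hp
      simp only [coe_filter, Set.mem_ofPred_eq, mem_alhFinset, Fin.snoc_last, and_true,
        isAntiLectureHall_snoc_iff _ hr, Fin.sum_snoc]
      exact ⟨⟨hal, hlast⟩, by omega, le_rfl⟩
    · intro l hl
      simp only [coe_filter, Set.mem_ofPred_eq] at hl
      simp only [← hl.2, Fin.snoc_init_self]
    · intro p _
      simp only [Fin.init_snoc]
  · refine card_eq_zero.2 (filter_eq_empty_iff.2 fun l hl hlast => hw ?_)
    obtain ⟨-, hsum, -⟩ := mem_alhFinset.1 hl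
    exact hlast ▸ hsum ▸ single_le_sum (fun _ _ => Nat.zero_le _) (mem_univ _)

theorem card_alhFinset_last (m w : ℕ) :
    #(alhFinset m w (m + 1)) =
      if ∑ i : Fin (m + 1), (i.1 + 1) ≤ w then
        #(alhFinset m (w - ∑ i : Fin (m + 1), (i.1 + 1)) 0)
      else 0 := by
  have hstair : ∀ l ∈ alhFinset m w (m + 1), ∀ i : Fin (m + 1), i.1 + 1 ≤ l i := fun l hl =>
    (mem_alhFinset.1 hl).1.succ_le (mem_alhFinset.1 hl).2.2
  split_ifs with hw
  · refine card_nbij' (fun l i => l i - (i.1 + 1)) (fun p i => p i + (i.1 + 1)) ?_ ?_ ?_ ?_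
    · intro l hl
      have hsub : (fun i : Fin (m + 1) => l i - (i.1 + 1) + (i.1 + 1)) = l :=
        funext fun i => Nat.sub_add_cancel (hstair l hl i)
      obtain ⟨hal, hsum, -⟩ := mem_alhFinset.1 hl
      refine mem_alhFinset.2 ⟨?_, ?_, Nat.zero_le _⟩
      · rwa [← isAntiLectureHall_add_staircase_iff, hsub]
      · rw [← hsum, ← sum_tsub_distrib _ fun i _ => hstair l hl i]
    · intro p hp
      obtain ⟨hal, hsum, -⟩ := mem_alhFinset.1 hp
      refine mem_alhFinset.2 ⟨(isAntiLectureHall_add_staircase_iff p).2 hal, ?_, ?_⟩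
      · rw [sum_add_distrib, hsum]
        omega
      · simp
    · intro l hl
      exact funext fun i => Nat.sub_add_cancel (hstair l hl i)
    · intro p _
      exact funext fun i => Nat.add_sub_cancel (p i) (i.1 + 1)
  · refine card_eq_zero.2 (eq_empty_of_forall_notMem fun l hl => hw ?_)
    exact (mem_alhFinset.1 hl).2.1 ▸ sum_le_sum fun i _ => hstair l hl i

noncomputable def alhSeries (m r : ℕ) : PowerSeries ℚ := mk fun w => (#(alhFinset m w r) : ℚ)

theorem coeff_alhSeries (m r w : ℕ) : coeff w (alhSeries m r) = #(alhFinset m w r) :=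
  coeff_mk _ _

theorem alhSeries_zero_sub : alhSeries 0 0 - alhSeries 0 1 = 1 := by
  ext w
  simp only [map_sub, coeff_alhSeries, card_alhFinset_zero, coeff_one]
  split_ifs <;> first | omega | norm_num

theorem alhSeries_succ_sub (m r : ℕ) (hr : r ≤ m + 1) :
    alhSeries (m + 1) r - alhSeries (m + 1) (r + 1) = X ^ r * alhSeries m r := by
  ext w
  rw [map_sub, coeff_alhSeries, coeff_alhSeries, card_alhFinset_eq_card_filter_add,
    card_filter_last_eq m w r hr, coeff_X_pow_mul']
  split_ifs <;> simp [coeff_alhSeries]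

theorem alhSeries_last (m : ℕ) :
    alhSeries m (m + 1) = X ^ (∑ i : Fin (m + 1), (i.1 + 1)) * alhSeries m 0 := by
  ext w
  rw [coeff_alhSeries, card_alhFinset_last, coeff_X_pow_mul']
  split_ifs <;> simp [coeff_alhSeries]

-- `qPochNeg k = (-q;q)_k` and `qPochSq k = (q²;q)_k`.
noncomputable def qPochNeg (k : ℕ) : PowerSeries ℚ := ∏ i ∈ range k, (1 + X ^ (i + 1))

noncomputable def qPochSq (k : ℕ) : PowerSeries ℚ := ∏ i ∈ range k, (1 - X ^ (i + 2))

def closedFormExp (n r : ℕ) : ℕ := ∑ j ∈ range r, (n - j)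

noncomputable def closedForm (n r : ℕ) : PowerSeries ℚ :=
  X ^ closedFormExp n r * qPochNeg r * qPochNeg (n - r)

theorem closedFormExp_self (n : ℕ) : closedFormExp n n = ∑ i : Fin n, (i.1 + 1) := by
  rw [closedFormExp, Fin.sum_univ_eq_sum_range (· + 1), ← sum_range_reflect]
  exact sum_congr rfl fun j hj => by simp only [mem_range] at hj; omega

theorem closedForm_sub_succ (n j : ℕ) (hj : j ≤ n) :
    closedForm (n + 1) j - closedForm (n + 1) (j + 1) =
      (1 - X ^ (n + 2)) * (X ^ j * closedForm n j) := by
  have hexp : closedFormExp (n + 1) j = j + closedFormExp n j := by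
    have hsucc : ∀ i ∈ range j, n + 1 - i = (n - i) + 1 := fun i hi => by
      simp only [mem_range] at hi; omega
    rw [closedFormExp, closedFormExp, sum_congr rfl hsucc, sum_add_distrib, sum_const,
      card_range, smul_eq_mul, mul_one, add_comm]
  have hexp' : closedFormExp (n + 1) (j + 1) = closedFormExp (n + 1) j + (n + 1 - j) :=
    sum_range_succ _ _
  obtain ⟨d, rfl⟩ := Nat.exists_eq_add_of_le hj
  simp only [closedForm, hexp', hexp, show j + d + 1 - j = d + 1 by omega,
    show j + d + 1 - (j + 1) = d by omega, show j + d - j = d by omega, qPochNeg,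
    prod_range_succ, pow_add]
  ring

theorem closedForm_zero_right (n : ℕ) : closedForm n 0 = qPochNeg n := by
  simp [closedForm, closedFormExp, qPochNeg]

theorem closedForm_self (n : ℕ) : closedForm n n = X ^ closedFormExp n n * closedForm n 0 := by
  simp [closedForm, closedFormExp, qPochNeg, mul_comm]

theorem eq_of_forall_sub_succ_eq {R : Type*} [CommRing R] [NoZeroDivisors R] {f g : ℕ → R}
    {k : ℕ} {c : R} (hc : c ≠ 1) (hstep : ∀ r < k, f r - f (r + 1) = g r - g (r + 1))
    (hf : f k = c * f 0) (hg : g k = c * g 0) {r : ℕ} (hr : r ≤ k) : f r = g r := by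
  have hconst : ∀ r ≤ k, f r - g r = f 0 - g 0 := by
    intro r hr
    induction r with
    | zero => rfl
    | succ r ih => rw [← ih (by omega)]; linear_combination -hstep r (by omega)
  have hzero : f 0 - g 0 = 0 := by
    have hfix : (c - 1) * (f 0 - g 0) = 0 := by linear_combination hconst k le_rfl - hf + hg
    exact (mul_eq_zero.1 hfix).resolve_left (sub_ne_zero.2 hc)
  exact sub_eq_zero.1 ((hconst r hr).trans hzero)

theorem X_pow_ne_one {R : Type*} [Semiring R] [Nontrivial R] {e : ℕ} (he : e ≠ 0) :
    (X : PowerSeries R) ^ e ≠ 1 := fun h => by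
  simpa [he] using congrArg constantCoeff h

theorem qPochSq_mul_eq_closedForm_succ {n : ℕ} {G H : ℕ → PowerSeries ℚ}
    (hGH : ∀ r ≤ n, G r - G (r + 1) = X ^ r * H r)
    (hH : ∀ r ≤ n, qPochSq n * H r = closedForm n r)
    (hG : G (n + 1) = X ^ closedFormExp (n + 1) (n + 1) * G 0) {r : ℕ} (hr : r ≤ n + 1) :
    qPochSq (n + 1) * G r = closedForm (n + 1) r := by
  have hexp : closedFormExp (n + 1) (n + 1) ≠ 0 := by
    simp [closedFormExp, sum_range_succ']
  refine eq_of_forall_sub_succ_eq (f := fun r => qPochSq (n + 1) * G r) (X_pow_ne_one hexp)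
    (fun j hj => ?_) (by simp only [hG]; ring) (closedForm_self _) hr
  calc qPochSq (n + 1) * G j - qPochSq (n + 1) * G (j + 1)
      = (1 - X ^ (n + 2)) * (X ^ j * (qPochSq n * H j)) := by
        rw [← mul_sub, hGH j (by omega), qPochSq, prod_range_succ, ← qPochSq]; ring
    _ = closedForm (n + 1) j - closedForm (n + 1) (j + 1) := by
        rw [hH j (by omega), closedForm_sub_succ n j (by omega)]

theorem qPochSq_mul_alhSeries (m : ℕ) {r : ℕ} (hr : r ≤ m + 1) :
    qPochSq (m + 1) * alhSeries m r = closedForm (m + 1) r := by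
  induction m generalizing r with
  | zero =>
    refine qPochSq_mul_eq_closedForm_succ (H := fun _ => 1) (fun r hr => ?_) (fun r hr => ?_)
      (by rw [alhSeries_last, closedFormExp_self]) hr
    · obtain rfl : r = 0 := by omega
      simpa using alhSeries_zero_sub
    · obtain rfl : r = 0 := by omega
      simp [qPochSq, closedForm, closedFormExp, qPochNeg]
  | succ m ih =>
    exact qPochSq_mul_eq_closedForm_succ (alhSeries_succ_sub m) (fun r hr => ih hr)
      (by rw [alhSeries_last, closedFormExp_self]) hr

theorem prod_mul_qPochSq (k : ℕ) :
    (∏ i ∈ range k, ((1 + X ^ (i + 1)) * (1 - X ^ (i + 2))⁻¹)) * qPochSq k = qPochNeg k := by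
  rw [qPochSq, ← prod_mul_distrib]
  exact prod_congr rfl fun i _ => by rw [mul_assoc, PowerSeries.inv_mul_cancel _ (by simp), mul_one]

theorem qPochSq_ne_zero (k : ℕ) : qPochSq k ≠ 0 :=
  prod_ne_zero_iff.2 fun i _ h => by simpa using congrArg constantCoeff h

theorem alhSeries_zero_eq_prod (m : ℕ) :
    alhSeries m 0 = ∏ i ∈ range (m + 1), ((1 + X ^ (i + 1)) * (1 - X ^ (i + 2))⁻¹) := by
  refine mul_left_cancel₀ (qPochSq_ne_zero (m + 1)) ?_
  rw [qPochSq_mul_alhSeries m (Nat.zero_le _), closedForm_zero_right, mul_comm, prod_mul_qPochSq]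

end AntiLectureHall

/-- **The Anti-Lecture Hall Theorem** (Corteel–Savage).
For `n ≥ 1` and every `N : ℕ`, the number of anti-lecture hall compositions
`λ ∈ A_n` (sequences `λ₁,…,λₙ` of nonnegative integers with
`λ₁/1 ≥ λ₂/2 ≥ … ≥ λₙ/n ≥ 0`, i.e. `(i+1)·λᵢ ≥ i·λ_{i+1}`) of weight `N`
equals the coefficient of `q^N` in `∏_{i=1}^{n} (1 + q^i)/(1 - q^{i+1})`. -/
theorem anti_lecture_hall_theorem (n : ℕ) (hn : 0 < n) (N : ℕ) :
    (Nat.card {l : Fin n → ℕ //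
        (∀ i : Fin n, ∀ h : i.1 + 1 < n,
          ((i.1 : ℤ) + 1) * (l ⟨i.1 + 1, h⟩ : ℤ) ≤ ((i.1 : ℤ) + 2) * (l i : ℤ)) ∧
        ∑ i, l i = N} : ℚ) =
      PowerSeries.coeff (R := ℚ) N
        (∏ i ∈ Finset.range n,
          ((1 + (PowerSeries.X : PowerSeries ℚ) ^ (i + 1)) *
            (1 - (PowerSeries.X : PowerSeries ℚ) ^ (i + 2))⁻¹)) := by
  obtain ⟨m, rfl⟩ := Nat.exists_eq_add_one.2 hn
  rw [← AntiLectureHall.alhSeries_zero_eq_prod, AntiLectureHall.coeff_alhSeries,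
    ← Fintype.card_coe, ← Nat.card_eq_fintype_card]
  congr 1
  refine Nat.card_congr (Equiv.subtypeEquivRight fun l => ?_)
  simp [AntiLectureHall.mem_alhFinset, AntiLectureHall.isAntiLectureHall_iff]
end

section
/- Let n ≥ 1 and let μ = (μ_1 ≥ μ_2 ≥ … ≥ μ_n ≥ 0) be a partition into n nonnegative parts, and for i ≥ 0 let m_i be the multiplicity of the part i in μ. Then the generating function A_μ(q) = ∑ q^{|λ|}, summed over all anti-lecture hall compositions λ ∈ A_n with ⌊λ⌋ = μ, satisfies A_μ(q) = q^{∑_{i=1}^{n} i·μ_i} · [n; m_0, m_1, …, m_{μ_1}]_q, an identity of polynomials in q, where [n; n_0,…,n_t]_q = (q;q)_n / ((q;q)_{n_0}⋯(q;q)_{n_t}) is the q-multinomial coefficient. -/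
open Finset

noncomputable def qf (k : ℕ) : RatFunc ℚ :=
  ∏ i ∈ Finset.range k, (1 - (RatFunc.X : RatFunc ℚ) * RatFunc.X ^ i)

lemma qf_zero : qf 0 = 1 := by simp [qf]

lemma qf_succ (k : ℕ) : qf (k+1) = qf k * (1 - RatFunc.X * RatFunc.X ^ k) := by
  simp [qf, Finset.prod_range_succ]

lemma one_sub_pow_ne (k : ℕ) : (1 - (RatFunc.X : RatFunc ℚ) * RatFunc.X ^ k) ≠ 0 := by
  rw [sub_ne_zero]
  intro h
  have hx : (1 : RatFunc ℚ) = RatFunc.X ^ (k+1) := by rw [h]; ring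
  have h1 : (algebraMap (Polynomial ℚ) (RatFunc ℚ)) 1 =
      (algebraMap (Polynomial ℚ) (RatFunc ℚ)) (Polynomial.X ^ (k+1)) := by
    simpa [RatFunc.algebraMap_X] using hx
  have := RatFunc.algebraMap_injective ℚ h1
  have hd := congrArg Polynomial.natDegree this
  simp [Polynomial.natDegree_X_pow] at hd
lemma qf_ne (k : ℕ) : qf k ≠ 0 := by
  induction k with
  | zero => simp [qf_zero]
  | succ k ih => rw [qf_succ]; exact mul_ne_zero ih (one_sub_pow_ne k)

noncomputable def qb (a b : ℕ) : RatFunc ℚ := qf (a+b) / (qf a * qf b)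

lemma qb_zero (b : ℕ) : qb 0 b = 1 := by
  simp [qb, qf_zero, div_self (qf_ne b)]

lemma qb_pascal (a m : ℕ) :
    qb (a+1) (m+1) = qb a (m+1) + RatFunc.X ^ (a+1) * qb (a+1) m := by
  have e1 : a + 1 + (m + 1) = (a + m + 1) + 1 := by ring
  have e2 : a + (m+1) = a + m + 1 := by ring
  have e3 : a + 1 + m = a + m + 1 := by ring
  rw [qb, qb, qb, e1, e2, e3, qf_succ (a+m+1), qf_succ a, qf_succ m]
  field_simp [qf_ne, one_sub_pow_ne]
  ring

lemma qb_sum (m : ℕ) : ∀ a : ℕ,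
    ∑ t ∈ Finset.range (a+1), RatFunc.X ^ t * qb t m = qb a (m+1) := by
  intro a
  induction a with
  | zero => simp [qb_zero]
  | succ a ih =>
      rw [Finset.sum_range_succ, ih, qb_pascal]

-- geometric: qb a 1 = sum
lemma qb_one (a : ℕ) : ∑ t ∈ Finset.range (a+1), (RatFunc.X : RatFunc ℚ) ^ t = qb a 1 := by
  have := qb_sum 0 a
  simpa [qb, qf_zero, div_one, div_self (qf_ne _)] using this

noncomputable def Tset (a c : ℕ) {n : ℕ} (μ : Fin (n+1) → ℕ) : Finset (Fin (n+1) → ℕ) :=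
  @Finset.filter _
    (fun r => r 0 ≤ a ∧
      ∀ i : Fin n, μ i.castSucc = μ i.succ → r i.succ ≤ r i.castSucc)
    (Classical.decPred _)
    (Fintype.piFinset fun i : Fin (n+1) => Finset.range (c + i.1 + 1))

lemma mem_Tset {a c n : ℕ} {μ : Fin (n+1) → ℕ} {r : Fin (n+1) → ℕ} :
    r ∈ Tset a c μ ↔ (∀ i : Fin (n+1), r i ≤ c + i.1) ∧ r 0 ≤ a ∧
      ∀ i : Fin n, μ i.castSucc = μ i.succ → r i.succ ≤ r i.castSucc := by
  simp [Tset, Fintype.mem_piFinset, Nat.lt_succ_iff, and_assoc]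

lemma peel (n a c : ℕ) (ha : a ≤ c) (μ : Fin (n+2) → ℕ) :
    ∑ r ∈ Tset a c μ, (RatFunc.X : RatFunc ℚ) ^ (∑ i, r i)
    = ∑ t ∈ Finset.range (a + 1), (RatFunc.X : RatFunc ℚ) ^ t *
        ∑ r' ∈ Tset (if μ 0 = μ 1 then t else c+1) (c+1) (fun i : Fin (n+1) => μ i.succ),
          (RatFunc.X : RatFunc ℚ) ^ (∑ i, r' i) := by
  have hrw : ∀ t ∈ Finset.range (a+1), (RatFunc.X : RatFunc ℚ) ^ t *
        ∑ r' ∈ Tset (if μ 0 = μ 1 then t else c+1) (c+1) (fun i : Fin (n+1) => μ i.succ),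
          (RatFunc.X : RatFunc ℚ) ^ (∑ i, r' i)
      = ∑ r' ∈ Tset (if μ 0 = μ 1 then t else c+1) (c+1) (fun i : Fin (n+1) => μ i.succ),
          (RatFunc.X : RatFunc ℚ) ^ (t + ∑ i, r' i) := by
    intro t _
    rw [Finset.mul_sum]
    exact Finset.sum_congr rfl fun r' _ => by rw [pow_add]
  rw [Finset.sum_congr rfl hrw, Finset.sum_sigma']
  refine Finset.sum_nbij' (i := fun r => (⟨r 0, Fin.tail r⟩ : Σ _ : ℕ, Fin (n+1) → ℕ))
    (j := fun p => Fin.cons (α := fun _ => ℕ) p.1 p.2) ?_ ?_ ?_ ?_ ?_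
  · -- membership forward (Tset → sigma)
    intro r hr
    rw [mem_Tset] at hr
    obtain ⟨hb, h0, hc⟩ := hr
    simp only [Finset.mem_sigma, Finset.mem_range]
    constructor
    · exact Nat.lt_succ_of_le h0
    · rw [mem_Tset]
      refine ⟨?_, ?_, ?_⟩
      · intro j
        have := hb j.succ
        simp only [Fin.tail, Fin.val_succ] at this ⊢
        omega
      · by_cases hμ : μ 0 = μ 1
        · rw [if_pos hμ]
          have := hc 0 (by simpa using hμ)
          simpa [Fin.tail] using this
        · rw [if_neg hμ]
          have := hb (Fin.succ 0)
          simp only [Fin.tail]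
          simp only [Fin.val_succ, Fin.val_zero] at this
          omega
      · intro j hμ
        have e1 : (j.succ : Fin (n+1)).castSucc = (j.castSucc).succ := (Fin.succ_castSucc j).symm
        have := hc j.succ (by rw [e1]; simpa using hμ)
        rw [e1] at this
        simpa [Fin.tail] using this
  · -- membership backward (sigma → Tset)
    rintro ⟨t, r'⟩ hp
    simp only [Finset.mem_sigma, Finset.mem_range] at hp
    obtain ⟨ht, hr'⟩ := hp
    rw [mem_Tset] at hr' ⊢
    obtain ⟨hb, h0, hc⟩ := hr'
    refine ⟨?_, ?_, ?_⟩
    · intro i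
      refine Fin.cases ?_ ?_ i
      · simpa using Nat.le_trans (Nat.lt_succ_iff.mp ht) ha
      · intro j
        have := hb j
        simp only [Fin.cons_succ, Fin.val_succ]
        omega
    · simpa using Nat.lt_succ_iff.mp ht
    · intro i
      refine Fin.cases ?_ ?_ i
      · intro hμ
        have hμ' : μ 0 = μ 1 := by
          have h1 : ((0 : Fin (n+1)).castSucc : Fin (n+2)) = 0 := rfl
          have h2 : ((0 : Fin (n+1)).succ : Fin (n+2)) = 1 := rfl
          rw [h1, h2] at hμ
          exact hμ
        rw [if_pos hμ'] at h0
        simp only [Fin.cons_succ, Fin.castSucc_zero, Fin.cons_zero]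
        exact h0
      · intro j hμ
        have e1 : (j.succ : Fin (n+1)).castSucc = (j.castSucc).succ := (Fin.succ_castSucc j).symm
        simp only [e1, Fin.cons_succ]
        apply hc j
        rw [e1] at hμ
        simpa using hμ
  · intro r _
    exact Fin.cons_self_tail r
  · rintro ⟨t, r'⟩ _
    simp [Fin.tail_cons]
  · intro r _
    simp only
    rw [Fin.sum_univ_succ]
    rfl

noncomputable def mult {n : ℕ} (μ : Fin n → ℕ) (v : ℕ) : ℕ :=
  (Finset.univ.filter fun i => μ i = v).card

lemma mult_succ {n : ℕ} (μ : Fin (n+1) → ℕ) (v : ℕ) :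
    mult μ v = (if μ 0 = v then 1 else 0) + mult (fun i : Fin n => μ i.succ) v := by
  rw [mult, mult, Finset.card_filter, Finset.card_filter, Fin.sum_univ_succ]

lemma prod_qf_ne {s : Finset ℕ} {f : ℕ → ℕ} : (∏ v ∈ s, qf (f v)) ≠ 0 :=
  Finset.prod_ne_zero_iff.mpr fun v _ => qf_ne _

lemma main (n : ℕ) : ∀ (μ : Fin (n+1) → ℕ), Antitone μ → ∀ a c : ℕ, a ≤ c →
    ∑ r ∈ Tset a c μ, (RatFunc.X : RatFunc ℚ) ^ (∑ i, r i)
    = qb a (mult μ (μ 0)) *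
        (qf (c + (n+1)) / (qf (c + mult μ (μ 0)) * ∏ v ∈ Finset.range (μ 0), qf (mult μ v))) := by
  induction n with
  | zero =>
      intro μ hμ a c hac
      have hm : mult μ (μ 0) = 1 := by
        rw [mult, Finset.filter_true_of_mem (fun i _ => congrArg μ (Fin.eq_zero i))]
        simp
      have hP : ∀ v ∈ Finset.range (μ 0), qf (mult μ v) = 1 := by
        intro v hv
        rw [Finset.mem_range] at hv
        have : mult μ v = 0 := by
          rw [mult, Finset.card_eq_zero, Finset.filter_eq_empty_iff]
          intro i _
          have : μ i = μ 0 := congrArg μ (Fin.eq_zero i)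
          omega
        rw [this, qf_zero]
      have hsum : ∑ r ∈ Tset a c μ, (RatFunc.X : RatFunc ℚ) ^ (∑ i, r i)
          = ∑ t ∈ Finset.range (a+1), (RatFunc.X : RatFunc ℚ) ^ t := by
        refine Finset.sum_nbij' (i := fun r => r 0) (j := fun t => fun _ => t) ?_ ?_ ?_ ?_ ?_
        · intro r hr
          rw [mem_Tset] at hr
          exact Finset.mem_range.mpr (Nat.lt_succ_of_le hr.2.1)
        · intro t ht
          rw [Finset.mem_range] at ht
          rw [mem_Tset]
          refine ⟨fun i => ?_, ?_, fun i => i.elim0⟩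
          · show t ≤ c + i.1
            omega
          · show t ≤ a
            omega
        · intro r _
          funext i
          exact congrArg r (Fin.eq_zero i).symm
        · intro t _
          rfl
        · intro r _
          rw [Fin.sum_univ_one]
      rw [hsum, qb_one, hm, Finset.prod_congr rfl hP]
      simp [div_self (qf_ne (c+1))]
  | succ n ih =>
      intro μ hμ a c hac
      set μ' : Fin (n+1) → ℕ := fun i => μ i.succ with hμ'def
      have hμ' : Antitone μ' := fun i j h => hμ (Fin.succ_le_succ_iff.mpr h)
      have hμ'0 : μ' 0 = μ 1 := rfl
      rw [peel n a c hac μ]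
      by_cases hcase : μ 0 = μ 1
      · -- same block
        have hm : mult μ (μ 0) = mult μ' (μ' 0) + 1 := by
          rw [mult_succ μ (μ 0), if_pos rfl, hμ'0, ← hcase]
          simp only [hμ'def]
          omega
        have hPv : ∀ v ∈ Finset.range (μ 0), qf (mult μ v) = qf (mult μ' v) := by
          intro v hv
          rw [Finset.mem_range] at hv
          rw [mult_succ μ v, if_neg (by omega)]
          simp [hμ'def]
        have hrange : Finset.range (μ' 0) = Finset.range (μ 0) := by rw [hμ'0, ← hcase]
        have hstep : ∀ t ∈ Finset.range (a+1),
            (RatFunc.X : RatFunc ℚ) ^ t *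
              ∑ r' ∈ Tset (if μ 0 = μ 1 then t else c+1) (c+1) μ',
                (RatFunc.X : RatFunc ℚ) ^ (∑ i, r' i)
            = (RatFunc.X : RatFunc ℚ) ^ t * qb t (mult μ' (μ' 0)) *
              (qf (c + (n+2)) / (qf (c + mult μ (μ 0)) * ∏ v ∈ Finset.range (μ 0), qf (mult μ v))) := by
          intro t ht
          rw [Finset.mem_range] at ht
          rw [if_pos hcase, ih μ' hμ' t (c+1) (by omega)]
          have e1 : c + 1 + (n+1) = c + (n+2) := by omega
          have e2 : c + 1 + mult μ' (μ' 0) = c + mult μ (μ 0) := by omega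
          rw [e1, e2, ← hrange, Finset.prod_congr rfl (fun v hv => (hPv v (hrange ▸ hv)).symm)]
          ring
        rw [Finset.sum_congr rfl hstep, ← Finset.sum_mul, qb_sum, ← hm]
      · -- new block
        have hlt : μ 1 < μ 0 := lt_of_le_of_ne (hμ (by simp [Fin.le_def])) (Ne.symm hcase)
        have hm1 : mult μ (μ 0) = 1 := by
          rw [mult_succ μ (μ 0), if_pos rfl]
          have : mult μ' (μ 0) = 0 := by
            rw [mult, Finset.card_eq_zero, Finset.filter_eq_empty_iff]
            intro i _
            have h1 : μ' i ≤ μ 1 := by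
              have : (0 : Fin (n+1)) ≤ i := Fin.zero_le i
              exact hμ'0 ▸ hμ' this
            omega
          simp only [hμ'def] at this ⊢
          omega
        have hPv : ∀ v, v ≤ μ 1 → mult μ v = mult μ' v := by
          intro v hv
          rw [mult_succ μ v, if_neg (by omega)]
          simp [hμ'def]
        have hmid : ∀ v, μ 1 < v → v < μ 0 → mult μ v = 0 := by
          intro v h1 h2
          rw [mult, Finset.card_eq_zero, Finset.filter_eq_empty_iff]
          intro i _
          rcases Fin.eq_zero_or_eq_succ i with h | ⟨j, rfl⟩
          · subst h; omega
          · have : μ j.succ ≤ μ 1 := hμ (by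
              rw [Fin.le_def]
              simp)
            omega
        have hPsplit : ∏ v ∈ Finset.range (μ 0), qf (mult μ v)
            = qf (mult μ' (μ 1)) * ∏ v ∈ Finset.range (μ 1), qf (mult μ' v) := by
          rw [Finset.range_eq_Ico, ← Finset.prod_Ico_consecutive _ (Nat.zero_le (μ 1 + 1)) hlt]
          have h2 : ∏ v ∈ Finset.Ico (μ 1 + 1) (μ 0), qf (mult μ v) = 1 := by
            apply Finset.prod_eq_one
            intro v hv
            rw [Finset.mem_Ico] at hv
            rw [hmid v (by omega) hv.2, qf_zero]
          rw [h2, mul_one, ← Finset.range_eq_Ico, Finset.prod_range_succ,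
            hPv (μ 1) le_rfl]
          rw [mul_comm]
          congr 1
          exact Finset.prod_congr rfl fun v hv => by
            rw [Finset.mem_range] at hv
            rw [hPv v (by omega)]
        have hstep : ∀ t ∈ Finset.range (a+1),
            (RatFunc.X : RatFunc ℚ) ^ t *
              ∑ r' ∈ Tset (if μ 0 = μ 1 then t else c+1) (c+1) μ',
                (RatFunc.X : RatFunc ℚ) ^ (∑ i, r' i)
            = (RatFunc.X : RatFunc ℚ) ^ t *
              (qb (c+1) (mult μ' (μ' 0)) *
                (qf (c + (n+2)) / (qf (c+1 + mult μ' (μ' 0)) * ∏ v ∈ Finset.range (μ' 0), qf (mult μ' v)))) := by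
          intro t ht
          rw [if_neg hcase, ih μ' hμ' (c+1) (c+1) le_rfl]
          have e1 : c + 1 + (n+1) = c + (n+2) := by omega
          rw [e1]
        rw [Finset.sum_congr rfl hstep, ← Finset.sum_mul, qb_one, hm1, hPsplit, hμ'0]
        simp only [qb]
        have e2 : c + 1 + mult μ' (μ 1) = c + (1 + mult μ' (μ 1)) := by omega
        field_simp [qf_ne, prod_qf_ne]

set_option maxHeartbeats 1000000 in
/-- For `n ≥ 1` and an antitone `μ : Fin n → ℕ` (a partition into `n`
nonnegative parts), the generating function `A_μ(q) = ∑ q^{|λ|}` over all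
anti-lecture hall compositions `λ ∈ A_n` with `⌊λ⌋ = μ` satisfies
`A_μ(q) = q^{∑_{i=1}^{n} i·μ_i} · [n; m₀, m₁, …, m_{μ₁}]_q`
(an identity stated in the field `RatFunc ℚ`, `q = RatFunc.X`), where `m_i` is
the multiplicity of the part `i` in `μ` and
`[n; n₀,…,n_t]_q = (q;q)_n / ((q;q)_{n₀}⋯(q;q)_{n_t})`. -/
theorem anti_lecture_hall_fiber_generating_function (n : ℕ) (hn : 0 < n)
    (μ : Fin n → ℕ) (hμ : Antitone μ) :
    (∑ᶠ l : {l : Fin n → ℕ //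
        (∀ i : Fin n, ∀ h : i.1 + 1 < n,
          ((i.1 : ℤ) + 1) * (l ⟨i.1 + 1, h⟩ : ℤ) ≤ ((i.1 : ℤ) + 2) * (l i : ℤ)) ∧
        (∀ i : Fin n, l i / (i.1 + 1) = μ i)},
      (RatFunc.X : RatFunc ℚ) ^ (∑ i, l.1 i)) =
      (RatFunc.X : RatFunc ℚ) ^ (∑ i : Fin n, (i.1 + 1) * μ i) *
        ((∏ i ∈ Finset.range n, (1 - (RatFunc.X : RatFunc ℚ) *
            (RatFunc.X : RatFunc ℚ) ^ i)) /
         ∏ i ∈ Finset.range (μ ⟨0, hn⟩ + 1),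
           ∏ j ∈ Finset.range ((Finset.univ.filter fun t : Fin n => μ t = i).card),
             (1 - (RatFunc.X : RatFunc ℚ) * (RatFunc.X : RatFunc ℚ) ^ j)) := by
  obtain ⟨m, rfl⟩ : ∃ m, n = m + 1 := ⟨n - 1, by omega⟩
  have hbound_of_div : ∀ l : Fin (m+1) → ℕ, (∀ i : Fin (m+1), l i / (i.1 + 1) = μ i) →
      ∀ i : Fin (m+1), (i.1 + 1) * μ i ≤ l i ∧ l i < (i.1 + 1) * μ i + (i.1 + 1) := by
    intro l hdiv i
    have h := hdiv i
    constructor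
    · have h1 : μ i * (i.1+1) ≤ l i := (Nat.le_div_iff_mul_le (by omega)).mp h.ge
      calc (i.1 + 1) * μ i = μ i * (i.1+1) := by ring
        _ ≤ l i := h1
    · have h2 : l i / (i.1 + 1) < μ i + 1 := by omega
      have h3 := (Nat.div_lt_iff_lt_mul (by omega : 0 < i.1 + 1)).mp h2
      calc l i < (μ i + 1) * (i.1 + 1) := h3
        _ = (i.1+1) * μ i + (i.1+1) := by ring
  have hset : {l : Fin (m+1) → ℕ |
      (∀ i : Fin (m+1), ∀ h : i.1 + 1 < m+1,
          ((i.1 : ℤ) + 1) * (l ⟨i.1 + 1, h⟩ : ℤ) ≤ ((i.1 : ℤ) + 2) * (l i : ℤ)) ∧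
        (∀ i : Fin (m+1), l i / (i.1 + 1) = μ i)}
      = ↑((Tset 0 0 μ).image (fun r i => (i.1 + 1) * μ i + r i)) := by
    ext l
    simp only [Set.mem_setOf_eq, Finset.coe_image, Set.mem_image, Finset.mem_coe]
    constructor
    · rintro ⟨hineq, hdiv⟩
      have hbound := hbound_of_div l hdiv
      refine ⟨fun i => l i - (i.1 + 1) * μ i, ?_, ?_⟩
      · rw [mem_Tset]
        refine ⟨fun i => ?_, ?_, ?_⟩
        · show l i - (i.1 + 1) * μ i ≤ 0 + i.1
          have := hbound i
          omega
        · show l 0 - ((0 : Fin (m+1)).1 + 1) * μ 0 ≤ 0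
          have := hbound 0
          simp only [Fin.val_zero] at this ⊢
          omega
        · intro i hcouple
          show l i.succ - (i.succ.1 + 1) * μ i.succ ≤ l i.castSucc - (i.castSucc.1 + 1) * μ i.castSucc
          have hlt : (i.castSucc).1 + 1 < m + 1 := by
            have := i.isLt
            simp only [Fin.coe_castSucc]
            omega
          have hZ := hineq i.castSucc hlt
          have hsucc : (⟨(i.castSucc).1 + 1, hlt⟩ : Fin (m+1)) = i.succ := Fin.ext (by simp)
          rw [hsucc] at hZ
          obtain ⟨hA1, hA2⟩ := hbound i.castSucc
          obtain ⟨hB1, hB2⟩ := hbound i.succ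
          simp only [Fin.coe_castSucc] at hZ hA1 hA2 ⊢
          simp only [Fin.val_succ] at hB1 hB2 ⊢
          rw [← hcouple] at hB1 hB2 ⊢
          -- goal : l i.succ - (i.1+1+1) * μ i.castSucc ≤ l i.castSucc - (i.1+1) * μ i.castSucc
          have hkey : l i.succ ≤ l i.castSucc + μ i.castSucc := by
            by_contra hcon
            push_neg at hcon
            have h1 : (l i.castSucc : ℤ) + μ i.castSucc + 1 ≤ l i.succ := by exact_mod_cast hcon
            have h2 : ((i.1:ℤ)+1) * ((l i.castSucc : ℤ) + μ i.castSucc + 1) ≤ ((i.1:ℤ)+1) * l i.succ :=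
              mul_le_mul_of_nonneg_left h1 (by positivity)
            have h3 : (l i.castSucc : ℤ) < (i.1+1) * μ i.castSucc + (i.1+1) := by exact_mod_cast hA2
            nlinarith [hZ, h2, h3]
          have hMM : (i.1+1+1) * μ i.castSucc = (i.1+1) * μ i.castSucc + μ i.castSucc := by ring
          omega
      · funext i
        have := (hbound i).1
        show (i.1 + 1) * μ i + (l i - (i.1 + 1) * μ i) = l i
        omega
    · rintro ⟨r, hr, rfl⟩
      rw [mem_Tset] at hr
      obtain ⟨hb, h0, hc⟩ := hr
      constructor
      · intro i h
        set j : Fin m := ⟨i.1, by omega⟩ with hj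
        have e1 : (⟨i.1 + 1, h⟩ : Fin (m+1)) = j.succ := Fin.ext (by simp [hj])
        have e2 : i = j.castSucc := Fin.ext (by simp [hj])
        rw [e1, e2]
        show ((j.castSucc.1 : ℤ) + 1) * ((j.succ.1 + 1) * μ j.succ + r j.succ : ℕ)
          ≤ ((j.castSucc.1 : ℤ) + 2) * ((j.castSucc.1 + 1) * μ j.castSucc + r j.castSucc : ℕ)
        have hbs : r j.succ ≤ j.1 + 1 := by
          have := hb j.succ
          simpa using this
        have hbc : r j.castSucc ≤ j.1 := by
          have := hb j.castSucc
          simpa using this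
        have hmono : μ j.succ ≤ μ j.castSucc := hμ (by
          rw [Fin.le_def]
          simp)
        simp only [Fin.coe_castSucc, Fin.val_succ]
        push_cast
        by_cases heq : μ j.castSucc = μ j.succ
        · have hrr := hc j heq
          rw [heq]
          have h1 : (r j.succ : ℤ) ≤ r j.castSucc := by exact_mod_cast hrr
          have h2 : ((j.1:ℤ)+1) * (r j.succ : ℤ) ≤ ((j.1:ℤ)+1) * r j.castSucc :=
            mul_le_mul_of_nonneg_left h1 (by positivity)
          have h3 : (0:ℤ) ≤ r j.castSucc := by positivity
          nlinarith [h2, h3]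
        · have h1 : (μ j.succ : ℤ) + 1 ≤ μ j.castSucc := by
            have : μ j.succ + 1 ≤ μ j.castSucc := by omega
            exact_mod_cast this
          have h2 : (r j.succ : ℤ) ≤ j.1 + 1 := by exact_mod_cast hbs
          have h3 : (0:ℤ) ≤ r j.castSucc := by positivity
          have h4 : ((j.1:ℤ)+1)*((j.1:ℤ)+2) * ((μ j.succ : ℤ) + 1) ≤ ((j.1:ℤ)+1)*((j.1:ℤ)+2) * μ j.castSucc :=
            mul_le_mul_of_nonneg_left h1 (by positivity)
          have h5 : ((j.1:ℤ)+1) * (r j.succ : ℤ) ≤ ((j.1:ℤ)+1) * ((j.1:ℤ)+2) :=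
            mul_le_mul_of_nonneg_left (by linarith) (by positivity)
          nlinarith [h4, h5, h3]
      · intro i
        show ((i.1 + 1) * μ i + r i) / (i.1 + 1) = μ i
        rw [Nat.mul_add_div (by omega)]
        have hri : r i < i.1 + 1 := by
          have := hb i
          omega
        rw [Nat.div_eq_of_lt hri]
        omega
  have hginj : Function.Injective (fun (r : Fin (m+1) → ℕ) (i : Fin (m+1)) => (i.1 + 1) * μ i + r i) := by
    intro r1 r2 h
    funext i
    have := congrFun h i
    simp only at this
    omega
  rw [finsum_subtype_eq_finsum_cond
    (f := fun l : Fin (m+1) → ℕ => (RatFunc.X : RatFunc ℚ) ^ (∑ i, l i))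
    (p := fun l : Fin (m+1) → ℕ => (∀ i : Fin (m+1), ∀ h : i.1 + 1 < m+1,
          ((i.1 : ℤ) + 1) * (l ⟨i.1 + 1, h⟩ : ℤ) ≤ ((i.1 : ℤ) + 2) * (l i : ℤ)) ∧
        (∀ i : Fin (m+1), l i / (i.1 + 1) = μ i))]
  rw [show (∑ᶠ (l : Fin (m+1) → ℕ) (_ : (∀ i : Fin (m+1), ∀ h : i.1 + 1 < m+1,
          ((i.1 : ℤ) + 1) * (l ⟨i.1 + 1, h⟩ : ℤ) ≤ ((i.1 : ℤ) + 2) * (l i : ℤ)) ∧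
        (∀ i : Fin (m+1), l i / (i.1 + 1) = μ i)), (RatFunc.X : RatFunc ℚ) ^ (∑ i, l i))
      = ∑ᶠ l ∈ {l : Fin (m+1) → ℕ |
      (∀ i : Fin (m+1), ∀ h : i.1 + 1 < m+1,
          ((i.1 : ℤ) + 1) * (l ⟨i.1 + 1, h⟩ : ℤ) ≤ ((i.1 : ℤ) + 2) * (l i : ℤ)) ∧
        (∀ i : Fin (m+1), l i / (i.1 + 1) = μ i)}, (RatFunc.X : RatFunc ℚ) ^ (∑ i, l i) from rfl]
  rw [hset, finsum_mem_coe_finset, Finset.sum_image (fun a _ b _ h => hginj h)]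
  have hsum : ∀ r ∈ Tset 0 0 μ, (RatFunc.X : RatFunc ℚ) ^ (∑ i : Fin (m+1), ((i.1 + 1) * μ i + r i))
      = (RatFunc.X : RatFunc ℚ) ^ (∑ i : Fin (m+1), (i.1 + 1) * μ i) * (RatFunc.X : RatFunc ℚ) ^ (∑ i, r i) := by
    intro r _
    rw [← pow_add, ← Finset.sum_add_distrib]
  rw [Finset.sum_congr rfl hsum, ← Finset.mul_sum, main m μ hμ 0 0 le_rfl]
  congr 1
  have h00 : (⟨0, hn⟩ : Fin (m+1)) = 0 := rfl
  rw [h00]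
  have hqb : qb 0 (mult μ (μ 0)) = 1 := by
    rw [qb, qf_zero]
    simp [div_self (qf_ne _)]
  rw [hqb, one_mul]
  have e1 : (0:ℕ) + (m+1) = m+1 := by omega
  have e2 : (0:ℕ) + mult μ (μ 0) = mult μ (μ 0) := by omega
  rw [e1, e2]
  have hprod : ∏ i ∈ Finset.range (μ 0 + 1),
      ∏ j ∈ Finset.range ((Finset.univ.filter fun t : Fin (m+1) => μ t = i).card),
        (1 - (RatFunc.X : RatFunc ℚ) * (RatFunc.X : RatFunc ℚ) ^ j)
      = qf (mult μ (μ 0)) * ∏ v ∈ Finset.range (μ 0), qf (mult μ v) := by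
    rw [Finset.prod_range_succ, mul_comm]
    congr 1
  rw [hprod]
  rfl
end

section
/- Let n ≥ k ≥ 1 and let μ = (μ_1 ≥ … ≥ μ_k ≥ 0) be a partition into k nonnegative parts. Then ∑ q^{|λ|}, summed over all truncated anti-lecture hall compositions λ ∈ A_{n,k} with ⌊λ⌋ = μ (where ⌊λ⌋ = (⌊λ_1/(n−k+1)⌋,…,⌊λ_k/n⌋)), equals [n choose k]_q · q^{(n−k)|μ|} · A_μ(q), an identity of polynomials in q, where A_μ(q) = ∑ q^{|ν|} summed over all ν ∈ A_k with (⌊ν_1/1⌋,…,⌊ν_k/k⌋) = μ, and [n choose k]_q is the Gaussian polynomial. -/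
/-!
Write `λᵢ = dᵢ μᵢ + rᵢ` with `dᵢ = n - k + 1 + i` and `0 ≤ rᵢ < dᵢ`. In these coordinates the
condition `λᵢ / dᵢ ≥ λᵢ₊₁ / (dᵢ + 1)` compares `(μᵢ, rᵢ)` and `(μᵢ₊₁, rᵢ₊₁)` lexicographically, so
`λ` lies over `μ` exactly when `r` is weakly decreasing along every block of equal parts of `μ`,
with no condition between blocks. Hence the fiber generating function is `q^{∑ dᵢ μᵢ}` times a
product over the blocks, a block of length `m` starting at position `s` contributing
`(q^{n-k+s+1}; q)_m / (q; q)_m`. The denominators do not depend on `n` and the numerators multiply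
to `(q^{n-k+1}; q)_k`, so dividing by the case `n = k` leaves `[n choose k]_q`. The product over
blocks is computed by induction, peeling off the first entry of `r`.
-/

open Finset

theorem Finset.prod_range_eq_mul_prod_Ico_of_eq_ite {M : Type*} [CommMonoid M] {F f g : ℕ → M}
    {m k : ℕ} (h : m ≤ k) (hF : ∀ j < k, F j = if j < m then f j else g j) :
    ∏ j ∈ range k, F j = (∏ j ∈ range m, f j) * ∏ j ∈ Ico m k, g j := by
  rw [← prod_range_mul_prod_Ico _ h]
  congr 1 <;> refine prod_congr rfl fun j hj => ?_
  · rw [hF j ((mem_range.1 hj).trans_le h), if_pos (mem_range.1 hj)]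
  · rw [hF j (mem_Ico.1 hj).2, if_neg (mem_Ico.1 hj).1.not_gt]

theorem Nat.exists_forall_lt_iff_lt_of_antitone {P : ℕ → Prop} (hP : Antitone P) (k : ℕ) :
    ∃ m ≤ k, ∀ j < k, (P j ↔ j < m) := by
  induction k with
  | zero => exact ⟨0, le_rfl, by simp⟩
  | succ k ih =>
    obtain ⟨m, hmk, hm⟩ := ih
    by_cases hPk : P k ∧ m = k
    · refine ⟨k + 1, le_rfl, fun j hj => ⟨fun _ => hj, fun _ => ?_⟩⟩
      rcases Nat.lt_succ_iff_lt_or_eq.1 hj with hj | rfl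
      · exact (hm j hj).2 (hPk.2 ▸ hj)
      · exact hPk.1
    · refine ⟨m, hmk.trans k.le_succ, fun j hj => ?_⟩
      rcases Nat.lt_succ_iff_lt_or_eq.1 hj with hj | rfl
      · exact hm j hj
      · refine ⟨fun hPj => ?_, fun hjm => absurd hjm hmk.not_gt⟩
        have hmj : m < j := lt_of_le_of_ne hmk fun h => hPk ⟨hPj, h⟩
        exact absurd ((hP hmj.le :) hPj) (by simpa using hm m hmj)

theorem finsum_subtype_eq_finsum_mem {α M : Type*} [AddCommMonoid M] {p : α → Prop} {s : Set α}
    (h : ∀ a, p a ↔ a ∈ s) (f : α → M) : ∑ᶠ x : Subtype p, f x = ∑ᶠ x ∈ s, f x := by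
  obtain rfl : p = (· ∈ s) := funext fun a => propext (h a)
  exact finsum_subtype_eq_finsum_cond _

theorem RatFunc.one_sub_X_pow_ne_zero {K : Type*} [Field K] {m : ℕ} (hm : 0 < m) :
    (1 - RatFunc.X ^ m : RatFunc K) ≠ 0 := by
  have h : (1 - RatFunc.X ^ m : RatFunc K) =
      algebraMap (Polynomial K) (RatFunc K) (-(Polynomial.X ^ m - Polynomial.C 1)) := by
    simp [RatFunc.algebraMap_X]
  rw [h]
  exact RatFunc.algebraMap_ne_zero (neg_ne_zero.2 (Polynomial.X_pow_sub_C_ne_zero hm 1))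

namespace AntiLectureHall

/-- The q-hockey-stick identity `∑_{v<b} q^v [v+m choose m]_q = [b+m choose m+1]_q`, cleared of
denominators. -/
theorem one_sub_pow_succ_mul_sum_pow_mul_prod {R : Type*} [CommRing R] (q : R) (m b : ℕ) :
    (1 - q ^ (m + 1)) * ∑ v ∈ range b, q ^ v * ∏ j ∈ range m, (1 - q ^ (v + 1 + j)) =
      ∏ j ∈ range (m + 1), (1 - q ^ (b + j)) := by
  induction b with
  | zero => simp [prod_range_succ']
  | succ b ih =>
    rw [sum_range_succ, mul_add, ih, prod_range_succ' (fun j => 1 - q ^ (b + j)),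
      prod_range_succ (fun j => 1 - q ^ (b + 1 + j))]
    simp only [add_zero, ← add_assoc, add_right_comm b]
    ring

/-- `c j` says that positions `j` and `j + 1` lie in the same block; `blockPos c j` is the
offset of `j` from the first position of its block, so `blockPos c j = j` says that `j` lies in
the first block. -/
def blockPos (c : ℕ → Bool) : ℕ → ℕ
  | 0 => 0
  | j + 1 => if c j then blockPos c j + 1 else 0

theorem blockPos_le (c : ℕ → Bool) (j : ℕ) : blockPos c j ≤ j := by
  induction j with
  | zero => rfl
  | succ j ih => rw [blockPos]; split <;> omega

theorem antitone_blockPos_eq_self (c : ℕ → Bool) : Antitone fun j => blockPos c j = j :=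
  antitone_nat_of_succ_le fun j h => by
    change blockPos c (j + 1) = j + 1 at h
    rw [blockPos] at h
    split at h <;> omega

theorem blockPos_succ_of_false {c : ℕ → Bool} (hc : c 0 = false) (j : ℕ) :
    blockPos c (j + 1) = blockPos (fun i => c (i + 1)) j := by
  induction j with
  | zero => simp [blockPos, hc]
  | succ j ih => rw [blockPos, ih, blockPos]

theorem blockPos_succ_of_true {c : ℕ → Bool} (hc : c 0 = true) (j : ℕ) :
    blockPos c (j + 1) =
      if blockPos (fun i => c (i + 1)) j = j then j + 1 else blockPos (fun i => c (i + 1)) j := by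
  induction j with
  | zero => simp [blockPos, hc]
  | succ j ih =>
    rw [blockPos, ih, blockPos]
    have := blockPos_le (fun i => c (i + 1)) j
    split_ifs <;> omega

theorem blockPos_succ_eq_succ_iff {c : ℕ → Bool} (hc : c 0 = true) (j : ℕ) :
    blockPos c (j + 1) = j + 1 ↔ blockPos (fun i => c (i + 1)) j = j := by
  have := blockPos_le (fun i => c (i + 1)) j
  rw [blockPos_succ_of_true hc]
  split_ifs <;> omega

/-- The bound `dⱼ = D + 1 + j` on `rⱼ`, except that the first bound `b` is free: peeling off the
first entry `v` of a block leaves a chain whose first bound is `v + 1`. -/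
def chainBound (b D j : ℕ) : ℕ := if j = 0 then b else D + 1 + j

def chains (b D : ℕ) (c : ℕ → Bool) (k : ℕ) : Finset (Fin k → ℕ) :=
  (Fintype.piFinset fun i : Fin k => range (chainBound b D i)).filter
    fun r => ∀ i : Fin k, ∀ h : i.1 + 1 < k, c i → r ⟨i + 1, h⟩ ≤ r i

theorem mem_chains {b D : ℕ} {c : ℕ → Bool} {k : ℕ} {r : Fin k → ℕ} :
    r ∈ chains b D c k ↔ (∀ i, r i < chainBound b D i) ∧
      ∀ i : Fin k, ∀ h : i.1 + 1 < k, c i → r ⟨i + 1, h⟩ ≤ r i := by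
  simp [chains]

theorem cons_mem_chains {b D : ℕ} {c : ℕ → Bool} {k v : ℕ} {s : Fin k → ℕ} (hb : b ≤ D + 1) :
    (Fin.cons v s : Fin (k + 1) → ℕ) ∈ chains b D c (k + 1) ↔
      v < b ∧ s ∈ chains (if c 0 then v + 1 else D + 2) (D + 1) (fun j => c (j + 1)) k := by
  have hcons : ∀ j (h : j + 1 < k + 1),
      (Fin.cons v s : Fin (k + 1) → ℕ) ⟨j + 1, h⟩ = s ⟨j, by omega⟩ := fun _ _ => rfl
  simp only [mem_chains, Fin.forall_fin_succ, Fin.cons_zero, Fin.cons_succ, Fin.val_zero,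
    Fin.val_succ, chainBound, hcons, if_true, Nat.add_one_ne_zero, if_false, add_lt_add_iff_right]
  cases hc : c 0 with
  | false =>
    have hbound : ∀ i : Fin k,
        s i < D + 1 + (i + 1) ↔ s i < if (i : ℕ) = 0 then D + 2 else D + 1 + 1 + i :=
      fun i => by split_ifs <;> omega
    simp only [Bool.false_eq_true, false_implies, implies_true, if_false, true_and, hbound,
      and_assoc]
  | true =>
    simp only [if_true, forall_const]
    constructor
    · rintro ⟨⟨hv, hs⟩, h0, hchain⟩
      refine ⟨hv, fun i => ?_, hchain⟩
      split_ifs with hi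
      · have := h0 (by omega)
        have : s i = s ⟨0, by omega⟩ := congrArg s (Fin.ext hi)
        omega
      · have := hs i
        omega
    · rintro ⟨hv, hs, hchain⟩
      refine ⟨⟨hv, fun i => ?_⟩, fun hk => ?_, hchain⟩
      · have := hs i
        split_ifs at this <;> omega
      · simpa using hs ⟨0, by omega⟩

theorem sum_chains_succ {M : Type*} [AddCommMonoid M] {b D k : ℕ} {c : ℕ → Bool}
    (hb : b ≤ D + 1) (f : (Fin (k + 1) → ℕ) → M) :
    ∑ r ∈ chains b D c (k + 1), f r = ∑ v ∈ range b,
      ∑ s ∈ chains (if c 0 then v + 1 else D + 2) (D + 1) (fun j => c (j + 1)) k,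
        f (Fin.cons v s) := by
  rw [sum_sigma']
  refine sum_bij' (fun r _ => ⟨r 0, Fin.tail r⟩) (fun x _ => Fin.cons x.1 x.2) (fun r hr => ?_)
    (fun x hx => ?_) (fun r _ => Fin.cons_self_tail r) (fun x _ => by simp) (fun r _ => by simp)
  · rw [← Fin.cons_self_tail r, cons_mem_chains hb] at hr
    simpa using hr
  · rw [mem_sigma, mem_range] at hx
    exact (cons_mem_chains hb).2 hx

section ClosedForm

variable {R : Type*} [CommRing R] (q : R)

def chainGF (b D : ℕ) (c : ℕ → Bool) (k : ℕ) : R := ∑ r ∈ chains b D c k, q ^ ∑ i, r i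

def chainDen (c : ℕ → Bool) (k : ℕ) : R := ∏ j ∈ range k, (1 - q ^ (blockPos c j + 1))

def chainNum (b D : ℕ) (c : ℕ → Bool) (k : ℕ) : R :=
  ∏ j ∈ range k, (1 - q ^ (if blockPos c j = j then b + j else D + 1 + j))

theorem chainGF_succ {b D k : ℕ} {c : ℕ → Bool} (hb : b ≤ D + 1) :
    chainGF q b D c (k + 1) = ∑ v ∈ range b,
      q ^ v * chainGF q (if c 0 then v + 1 else D + 2) (D + 1) (fun j => c (j + 1)) k := by
  simp only [chainGF, sum_chains_succ hb, Fin.sum_cons, pow_add, mul_sum]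

theorem chainNum_succ (b D k : ℕ) (c : ℕ → Bool) :
    chainNum q b D c (k + 1) =
      (1 - q ^ b) * chainNum q (if c 0 then b + 1 else D + 2) (D + 1) (fun j => c (j + 1)) k := by
  rw [chainNum, prod_range_succ', mul_comm, chainNum]
  congr 1
  refine prod_congr rfl fun j _ => ?_
  have := blockPos_le (fun i => c (i + 1)) j
  cases hc : c 0
  · simp only [blockPos_succ_of_false hc, Bool.false_eq_true, if_false]
    split_ifs <;> first | omega | (congr 2; omega)
  · simp only [blockPos_succ_eq_succ_iff hc, if_true]
    split_ifs <;> first | omega | (congr 2; omega)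

theorem chainDen_succ_of_false {c : ℕ → Bool} (hc : c 0 = false) (k : ℕ) :
    chainDen q c (k + 1) = (1 - q) * chainDen q (fun j => c (j + 1)) k := by
  rw [chainDen, prod_range_succ', mul_comm, chainDen]
  simp only [blockPos_succ_of_false hc, show blockPos c 0 = 0 from rfl, zero_add, pow_one]

theorem chainNum_eq_of_forall_lt_iff {b D k m : ℕ} {c : ℕ → Bool} (hmk : m ≤ k)
    (hm : ∀ j < k, blockPos c j = j ↔ j < m) :
    chainNum q b D c k =
      (∏ j ∈ range m, (1 - q ^ (b + j))) * ∏ j ∈ Ico m k, (1 - q ^ (D + 1 + j)) :=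
  prod_range_eq_mul_prod_Ico_of_eq_ite hmk fun j hj => by simp only [hm j hj]; split_ifs <;> rfl

theorem chainDen_eq_of_forall_lt_iff {k m : ℕ} {c : ℕ → Bool} (hmk : m ≤ k)
    (hm : ∀ j < k, blockPos c j = j ↔ j < m) :
    chainDen q c k =
      (∏ j ∈ range m, (1 - q ^ (j + 1))) * ∏ j ∈ Ico m k, (1 - q ^ (blockPos c j + 1)) :=
  prod_range_eq_mul_prod_Ico_of_eq_ite hmk fun j hj => by
    split_ifs with hjm
    · rw [(hm j hj).2 hjm]
    · rfl

theorem chainDen_succ_of_true {c : ℕ → Bool} (hc : c 0 = true) {k m : ℕ} (hmk : m ≤ k)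
    (hm : ∀ j < k, blockPos (fun i => c (i + 1)) j = j ↔ j < m) :
    chainDen q c (k + 1) = (1 - q ^ (m + 1)) * chainDen q (fun j => c (j + 1)) k := by
  have hm' : ∀ j < k + 1, blockPos c j = j ↔ j < m + 1
    | 0, _ => by simp [blockPos]
    | j + 1, hj => by rw [blockPos_succ_eq_succ_iff hc, hm j (by omega)]; omega
  rw [chainDen_eq_of_forall_lt_iff q (by omega) hm', chainDen_eq_of_forall_lt_iff q hmk hm,
    prod_range_succ, ← prod_Ico_add']
  have htail : ∏ j ∈ Ico m k, (1 - q ^ (blockPos c (j + 1) + 1)) =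
      ∏ j ∈ Ico m k, (1 - q ^ (blockPos (fun i => c (i + 1)) j + 1)) :=
    prod_congr rfl fun j hj => by
      rw [blockPos_succ_of_true hc, if_neg ((hm j (mem_Ico.1 hj).2).not.2 (mem_Ico.1 hj).1.not_gt)]
  rw [htail]
  ring

theorem sum_pow_mul_chainNum {D k m : ℕ} {c : ℕ → Bool} (hmk : m ≤ k)
    (hm : ∀ j < k, blockPos c j = j ↔ j < m) (b : ℕ) :
    (1 - q ^ (m + 1)) * ∑ v ∈ range b, q ^ v * chainNum q (v + 1) D c k =
      (1 - q ^ b) * chainNum q (b + 1) D c k := by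
  simp only [chainNum_eq_of_forall_lt_iff q hmk hm, ← mul_assoc, ← sum_mul]
  rw [one_sub_pow_succ_mul_sum_pow_mul_prod, prod_range_succ']
  simp only [add_zero, ← add_assoc, add_right_comm b 1]
  ring

theorem chainGF_mul_chainDen_succ_of_false {b D k : ℕ} {c : ℕ → Bool} (hc : c 0 = false)
    (hb : b ≤ D + 1)
    (ih : chainGF q (D + 2) (D + 1) (fun j => c (j + 1)) k * chainDen q (fun j => c (j + 1)) k =
      chainNum q (D + 2) (D + 1) (fun j => c (j + 1)) k) :
    chainGF q b D c (k + 1) * chainDen q c (k + 1) = chainNum q b D c (k + 1) := by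
  rw [chainGF_succ q hb, chainDen_succ_of_false q hc, chainNum_succ, hc]
  simp only [Bool.false_eq_true, if_false, ← sum_mul]
  rw [← ih, ← geom_sum_mul_neg]
  ring

theorem chainGF_mul_chainDen_succ_of_true {b D k : ℕ} {c : ℕ → Bool} (hc : c 0 = true)
    (hb : b ≤ D + 1)
    (ih : ∀ v < b, chainGF q (v + 1) (D + 1) (fun j => c (j + 1)) k *
      chainDen q (fun j => c (j + 1)) k = chainNum q (v + 1) (D + 1) (fun j => c (j + 1)) k) :
    chainGF q b D c (k + 1) * chainDen q c (k + 1) = chainNum q b D c (k + 1) := by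
  obtain ⟨m, hmk, hm⟩ :=
    Nat.exists_forall_lt_iff_lt_of_antitone (antitone_blockPos_eq_self fun j => c (j + 1)) k
  calc chainGF q b D c (k + 1) * chainDen q c (k + 1)
      = (1 - q ^ (m + 1)) * ∑ v ∈ range b, q ^ v * (chainGF q (v + 1) (D + 1)
          (fun j => c (j + 1)) k * chainDen q (fun j => c (j + 1)) k) := by
        rw [chainGF_succ q hb, chainDen_succ_of_true q hc hmk hm, hc, sum_mul, mul_sum]
        exact sum_congr rfl fun v _ => by simp only [if_true]; ring
    _ = (1 - q ^ (m + 1)) * ∑ v ∈ range b, q ^ v * chainNum q (v + 1) (D + 1)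
          (fun j => c (j + 1)) k := by
        rw [sum_congr rfl fun v hv => by rw [ih v (mem_range.1 hv)]]
    _ = chainNum q b D c (k + 1) := by
        rw [sum_pow_mul_chainNum q hmk hm, chainNum_succ, hc, if_pos rfl]

theorem chainGF_mul_chainDen (k : ℕ) : ∀ (b D : ℕ) (c : ℕ → Bool), b ≤ D + 1 →
    chainGF q b D c k * chainDen q c k = chainNum q b D c k := by
  induction k with
  | zero => intro b D c _; simp [chainGF, chainDen, chainNum, chains]
  | succ k ih =>
    intro b D c hb
    cases hc : c 0
    · exact chainGF_mul_chainDen_succ_of_false q hc hb (ih _ _ _ (by omega))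
    · exact chainGF_mul_chainDen_succ_of_true q hc hb fun v hv => ih _ _ _ (by omega)

theorem chainGF_succ_self_mul_chainDen (a k : ℕ) (c : ℕ → Bool) :
    chainGF q (a + 1) a c k * chainDen q c k = ∏ j ∈ range k, (1 - q ^ (a + 1 + j)) := by
  simp [chainGF_mul_chainDen q k (a + 1) a c le_rfl, chainNum]

end ClosedForm

theorem mul_add_le_mul_add_iff {d m m' r r' : ℕ} (hr : r < d) (hr' : r' ≤ d) :
    d * ((d + 1) * m' + r') ≤ (d + 1) * (d * m + r) ↔ m' < m ∨ m' = m ∧ r' ≤ r := by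
  rcases lt_trichotomy m' m with h | rfl | h
  · have : d * (d + 1) * (m' + 1) ≤ d * (d + 1) * m := Nat.mul_le_mul_left _ h
    simp only [h, true_or, iff_true]
    nlinarith
  · simp only [lt_irrefl, true_and, false_or]
    constructor <;> intro h <;> nlinarith
  · have : d * (d + 1) * (m + 1) ≤ d * (d + 1) * m' := Nat.mul_le_mul_left _ h
    simp only [h.not_gt, h.ne', false_and, or_false, iff_false, not_le]
    nlinarith

def link {k : ℕ} (μ : Fin k → ℕ) (j : ℕ) : Bool :=
  decide (∃ h : j + 1 < k, μ ⟨j, by omega⟩ = μ ⟨j + 1, h⟩)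

/-- The set of `λ ∈ A_{a+k,k}` with `⌊λ⌋ = μ`. -/
def truncFiber {k : ℕ} (a : ℕ) (μ : Fin k → ℕ) : Set (Fin k → ℕ) :=
  {l | (∀ i : Fin k, ∀ h : i.1 + 1 < k, (a + 1 + i) * l ⟨i + 1, h⟩ ≤ (a + 1 + i + 1) * l i) ∧
    ∀ i, l i / (a + 1 + i) = μ i}

theorem mem_truncFiber_iff {k a : ℕ} {μ : Fin k → ℕ} {l : Fin k → ℕ} :
    l ∈ truncFiber a μ ↔ (∀ i : Fin k, ∀ h : i.1 + 1 < k,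
      ((a : ℤ) + i + 1) * (l ⟨i + 1, h⟩ : ℤ) ≤ ((a : ℤ) + i + 2) * (l i : ℤ)) ∧
        ∀ i : Fin k, l i / (a + 1 + i) = μ i := by
  refine and_congr (forall₂_congr fun i h => ?_) Iff.rfl
  rw [← Nat.cast_le (α := ℤ)]
  push_cast
  ring_nf

theorem truncFiber_eq_image {k a : ℕ} {μ : Fin k → ℕ} (hμ : Antitone μ) :
    truncFiber a μ =
      (fun (r : Fin k → ℕ) i => (a + 1 + i) * μ i + r i) '' ↑(chains (a + 1) a (link μ) k) := by
  have hbound : ∀ i : ℕ, chainBound (a + 1) a i = a + 1 + i := fun i => by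
    unfold chainBound; split_ifs <;> omega
  ext l
  simp only [truncFiber, Set.mem_ofPred_eq, Set.mem_image, Finset.mem_coe, mem_chains, hbound,
    link, decide_eq_true_eq]
  constructor
  · rintro ⟨hineq, hdiv⟩
    have hl : ∀ i : Fin k, l i = (a + 1 + i) * μ i + l i % (a + 1 + i) := fun i => by
      rw [← hdiv i, Nat.div_add_mod]
    refine ⟨fun i => l i % (a + 1 + i), ⟨fun i => Nat.mod_lt _ (by omega), ?_⟩,
      funext fun i => (hl i).symm⟩
    rintro i h ⟨_, hμi⟩
    have := hineq i h
    rw [hl i, hl ⟨i + 1, h⟩] at this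
    rcases (mul_add_le_mul_add_iff (Nat.mod_lt _ (by omega))
      (Nat.le_of_lt_succ (Nat.mod_lt _ (by omega)))).1 this with hlt | ⟨-, hle⟩
    · exact absurd hμi (ne_of_gt hlt)
    · exact hle
  · rintro ⟨r, ⟨hr, hchain⟩, rfl⟩
    refine ⟨fun i h => ?_, fun i => ?_⟩
    · refine (mul_add_le_mul_add_iff (hr i) (Nat.le_of_lt_succ (hr _))).2 ?_
      by_cases heq : μ i = μ ⟨i + 1, h⟩
      · exact Or.inr ⟨heq.symm, hchain i h ⟨h, heq⟩⟩
      · exact Or.inl <|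
          lt_of_le_of_ne (hμ (Fin.mk_le_mk.2 (by omega) : i ≤ ⟨i + 1, h⟩)) (Ne.symm heq)
    · rw [Nat.mul_add_div (by omega), Nat.div_eq_of_lt (hr i), add_zero]

theorem finsum_mem_truncFiber {R : Type*} [CommRing R] (q : R) {k a : ℕ} {μ : Fin k → ℕ}
    (hμ : Antitone μ) :
    ∑ᶠ l ∈ truncFiber a μ, q ^ ∑ i, l i =
      q ^ (∑ i, (a + 1 + i) * μ i) * chainGF q (a + 1) a (link μ) k := by
  have hinj : Set.InjOn (fun (r : Fin k → ℕ) i => (a + 1 + i) * μ i + r i)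
      ↑(chains (a + 1) a (link μ) k) :=
    fun r _ r' _ h => funext fun i => by simpa using congrFun h i
  rw [truncFiber_eq_image hμ, finsum_mem_image hinj, finsum_mem_coe_finset, chainGF, mul_sum]
  simp only [sum_add_distrib, pow_add]

end AntiLectureHall

open AntiLectureHall Finset in
theorem truncated_anti_lecture_hall_fiber_general (n k : ℕ) (hkn : k ≤ n)
    (μ : Fin k → ℕ) (hμ : Antitone μ) :
    (∑ᶠ l : {l : Fin k → ℕ //
        (∀ i : Fin k, ∀ h : i.1 + 1 < k,
          ((n : ℤ) - k + i.1 + 1) * (l ⟨i.1 + 1, h⟩ : ℤ) ≤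
            ((n : ℤ) - k + i.1 + 2) * (l i : ℤ)) ∧
        (∀ i : Fin k, l i / (n + 1 - k + i.1) = μ i)},
      (RatFunc.X : RatFunc ℚ) ^ (∑ i, l.1 i)) =
      ((∏ i ∈ Finset.range k, (1 - (RatFunc.X : RatFunc ℚ) ^ (n + 1 - k + i))) /
        (∏ i ∈ Finset.range k, (1 - (RatFunc.X : RatFunc ℚ) ^ (1 + i)))) *
      (RatFunc.X : RatFunc ℚ) ^ ((n - k) * ∑ i, μ i) *
      (∑ᶠ l : {l : Fin k → ℕ //
        (∀ i : Fin k, ∀ h : i.1 + 1 < k,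
          ((i.1 : ℤ) + 1) * (l ⟨i.1 + 1, h⟩ : ℤ) ≤ ((i.1 : ℤ) + 2) * (l i : ℤ)) ∧
        (∀ i : Fin k, l i / (i.1 + 1) = μ i)},
      (RatFunc.X : RatFunc ℚ) ^ (∑ i, l.1 i)) := by
  set q : RatFunc ℚ := RatFunc.X
  rw [finsum_subtype_eq_finsum_mem (s := truncFiber (n - k) μ) ?hL (fun l => q ^ ∑ i, l i),
    finsum_subtype_eq_finsum_mem (s := truncFiber 0 μ) ?hR (fun l => q ^ ∑ i, l i),
    finsum_mem_truncFiber q hμ, finsum_mem_truncFiber q hμ]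
  case hL =>
    intro l
    rw [mem_truncFiber_iff, Nat.cast_sub hkn]
    simp only [show ∀ i, n + 1 - k + i = n - k + 1 + i by omega]
  case hR => simp [mem_truncFiber_iff, add_comm 1]
  have hₐ := chainGF_succ_self_mul_chainDen q (n - k) k (link μ)
  have h₀ := chainGF_succ_self_mul_chainDen q 0 k (link μ)
  have hweight : ∑ i : Fin k, (n - k + 1 + i) * μ i =
      (n - k) * ∑ i, μ i + ∑ i : Fin k, (0 + 1 + i) * μ i := by
    rw [mul_sum, ← sum_add_distrib]
    exact sum_congr rfl fun i _ => by ring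
  have hP₀ : ∏ i ∈ range k, (1 - q ^ (1 + i)) ≠ 0 :=
    prod_ne_zero_iff.2 fun i _ => RatFunc.one_sub_X_pow_ne_zero (by omega)
  rw [hweight, pow_add,
    prod_congr rfl fun i _ => by rw [show n + 1 - k + i = n - k + 1 + i by omega]]
  simp only [zero_add] at h₀ ⊢
  field_simp
  rw [← hₐ, ← h₀]
  ring

/-- For `n ≥ k ≥ 1` and an antitone `μ : Fin k → ℕ` (a partition into `k`
nonnegative parts), the generating function `∑ q^{|λ|}` over all truncated
anti-lecture hall compositions `λ ∈ A_{n,k}` with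
`⌊λ⌋ = (⌊λ₁/(n-k+1)⌋,…,⌊λ_k/n⌋) = μ` equals
`[n choose k]_q · q^{(n-k)|μ|} · A_μ(q)` (an identity stated in the field
`RatFunc ℚ`, `q = RatFunc.X`), where `A_μ(q) = ∑ q^{|ν|}` over all `ν ∈ A_k`
with `(⌊ν₁/1⌋,…,⌊ν_k/k⌋) = μ`, and `[n choose k]_q = (q^{n-k+1};q)_k/(q;q)_k`
is the Gaussian polynomial. -/
theorem truncated_anti_lecture_hall_fiber (n k : ℕ) (hk : 1 ≤ k) (hkn : k ≤ n)
    (μ : Fin k → ℕ) (hμ : Antitone μ) :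
    (∑ᶠ l : {l : Fin k → ℕ //
        (∀ i : Fin k, ∀ h : i.1 + 1 < k,
          ((n : ℤ) - k + i.1 + 1) * (l ⟨i.1 + 1, h⟩ : ℤ) ≤
            ((n : ℤ) - k + i.1 + 2) * (l i : ℤ)) ∧
        (∀ i : Fin k, l i / (n + 1 - k + i.1) = μ i)},
      (RatFunc.X : RatFunc ℚ) ^ (∑ i, l.1 i)) =
      ((∏ i ∈ Finset.range k, (1 - (RatFunc.X : RatFunc ℚ) ^ (n + 1 - k + i))) /
        (∏ i ∈ Finset.range k, (1 - (RatFunc.X : RatFunc ℚ) ^ (1 + i)))) *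
      (RatFunc.X : RatFunc ℚ) ^ ((n - k) * ∑ i, μ i) *
      (∑ᶠ l : {l : Fin k → ℕ //
        (∀ i : Fin k, ∀ h : i.1 + 1 < k,
          ((i.1 : ℤ) + 1) * (l ⟨i.1 + 1, h⟩ : ℤ) ≤ ((i.1 : ℤ) + 2) * (l i : ℤ)) ∧
        (∀ i : Fin k, l i / (i.1 + 1) = μ i)},
      (RatFunc.X : RatFunc ℚ) ^ (∑ i, l.1 i)) :=
  truncated_anti_lecture_hall_fiber_general n k hkn μ hμ
end

section
/- For integers n ≥ k ≥ 0 and every nonnegative integer N, let R_{n,k} be the set of partitions of N into odd parts less than or equal to 2n−1 in which at most ⌊k/2⌋ parts belong to the set {2⌈k/2⌉+1, 2⌈k/2⌉+3, …, 2(n−⌊k/2⌋)−1}. Then ∑_{λ∈R_{n,k}} q^{|λ|} = ( ∑_{i=0}^{⌊k/2⌋} q^{i(2⌈k/2⌉+1)} [n−k−1+i choose i]_{q²} ) / ( (q;q²)_{⌈k/2⌉} · ∏_{i=0}^{⌊k/2⌋−1}(1 − q^{2n−1−2i}) ) as formal power series in q, where [·]_{q²} is the Gaussian polynomial in q², (q;q²)_m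 = ∏_{i=0}^{m−1}(1 − q^{2i+1}), and ∏_{i=0}^{⌊k/2⌋−1}(1 − q^{2n−1−2i}) equals (q^{2n−1};q^{−2})_{⌊k/2⌋}. -/
/-!
Write `a = ⌈k/2⌉` and `b = ⌊k/2⌋`. Only the parts in the middle block `2a+1, 2a+3, …, 2(n-b)-1`
are restricted, so the generating function factors into that of the middle parts (at most `b`
of them) and `∏ (1 - q^s)⁻¹` over the remaining `a` small and `b` large odd parts.

Partitions into exactly `i` parts taken from the progression `c, c+e, …, c+(m-1)e` have
generating function `q^{ic} [m-1+i choose i]_{q^e}`: splitting on whether the largest allowed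
part occurs gives the `q`-Pascal recurrence, which the product formula satisfies.
-/

open PowerSeries Finset

namespace Nat.Partition

section CommSemiring

variable (R : Type*) [CommSemiring R]

noncomputable def genFunOf (P : Multiset ℕ → Prop) : R⟦X⟧ :=
  PowerSeries.mk fun N => (Nat.card {p : N.Partition // P p.parts} : R)

variable {R} {P Q : Multiset ℕ → Prop}

@[simp]
lemma coeff_genFunOf (N : ℕ) :
    coeff N (genFunOf R P) = Nat.card {p : N.Partition // P p.parts} :=
  coeff_mk _ _

lemma genFunOf_congr (h : ∀ M, P M ↔ Q M) : genFunOf R P = genFunOf R Q := by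
  simp only [genFunOf, h]

lemma coeff_genFunOf_eq_card_multiset (hP : ∀ M, P M → ∀ x ∈ M, 0 < x) (N : ℕ) :
    coeff N (genFunOf R P) = Nat.card {M : Multiset ℕ // P M ∧ M.sum = N} := by
  rw [coeff_genFunOf]
  congr 1
  exact Nat.card_congr
    { toFun p := ⟨p.1.parts, p.2, p.1.parts_sum⟩
      invFun M := ⟨⟨M.1, hP _ M.2.1 _, M.2.2⟩, M.2.1⟩
      left_inv _ := rfl
      right_inv _ := rfl }

lemma genFunOf_eq_one_of_iff_eq_zero (h : ∀ M, P M ↔ M = 0) : genFunOf R P = 1 := by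
  rw [genFunOf_congr h]
  ext N
  rw [coeff_genFunOf, coeff_one]
  split_ifs with hN
  · subst hN
    simp
  · rw [Nat.card_eq_zero.2 (.inl ⟨fun p => hN (p.2 ▸ p.1.parts_sum).symm⟩), Nat.cast_zero]

lemma genFunOf_eq_zero_of_forall_not (h : ∀ M, ¬ P M) : genFunOf R P = 0 := by
  ext N
  simp [h]

lemma genFunOf_eq_add (q : Multiset ℕ → Prop) :
    genFunOf R P = genFunOf R (fun M => P M ∧ q M) + genFunOf R (fun M => P M ∧ ¬ q M) := by
  classical
  ext N
  rw [map_add, coeff_genFunOf, coeff_genFunOf, coeff_genFunOf, ← Nat.cast_add, ← Nat.card_sum]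
  have e (r : Multiset ℕ → Prop) := Equiv.subtypeSubtypeEquivSubtypeInter
    (fun p : N.Partition => P p.parts) (fun p => r p.parts)
  exact congrArg _ (Nat.card_congr <| (Equiv.sumCompl fun p : {p : N.Partition // P p.parts} =>
    q p.1.parts).symm.trans <| .sumCongr (e q) (e (¬ q ·)))

lemma genFunOf_and_mem {s : ℕ} (hs : 0 < s) :
    genFunOf R (fun M => P M ∧ s ∈ M) = X ^ s * genFunOf R (fun M => P (s ::ₘ M)) := by
  ext t
  rw [coeff_X_pow_mul', coeff_genFunOf]
  split_ifs with hst
  · rw [coeff_genFunOf]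
    exact congrArg _ <| Nat.card_congr
      { toFun p := ⟨⟨p.1.parts.erase s, fun hx => p.1.parts_pos (Multiset.mem_of_mem_erase hx),
          by have := Multiset.sum_erase p.2.2; rw [p.1.parts_sum] at this; omega⟩,
          by rw [Multiset.cons_erase p.2.2]; exact p.2.1⟩
        invFun p := ⟨⟨s ::ₘ p.1.parts, by
            rintro x hx
            rcases Multiset.mem_cons.1 hx with rfl | hx
            exacts [hs, p.1.parts_pos hx], by rw [Multiset.sum_cons, p.1.parts_sum]; omega⟩,
          p.2, Multiset.mem_cons_self _ _⟩
        left_inv p := Subtype.ext <| Nat.Partition.ext <| Multiset.cons_erase p.2.2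
        right_inv p := Subtype.ext <| Nat.Partition.ext <| Multiset.erase_cons_head _ _ }
  · rw [Nat.card_eq_zero.2 (.inl ⟨fun p => hst (le_of_mem_parts p.2.2)⟩), Nat.cast_zero]

lemma genFunOf_eq_mul (q : ℕ → Prop) [DecidablePred q] {T : Multiset ℕ → Prop}
    (hT : ∀ M, T M ↔ P (M.filter q) ∧ Q (M.filter (¬ q ·)))
    (hP : ∀ M, P M → ∀ x ∈ M, q x) (hQ : ∀ M, Q M → ∀ x ∈ M, ¬ q x) :
    genFunOf R T = genFunOf R P * genFunOf R Q := by
  have split_add {M M' : Multiset ℕ} (hM : P M) (hM' : Q M') :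
      (M + M').filter q = M ∧ (M + M').filter (¬ q ·) = M' := by
    rw [Multiset.filter_add, Multiset.filter_add, Multiset.filter_eq_self.2 (hP M hM),
      Multiset.filter_eq_self.2 (hQ M' hM'), Multiset.filter_eq_nil.2 (hQ M' hM'),
      Multiset.filter_eq_nil.2 fun x hx => not_not.2 (hP M hM x hx), add_zero, zero_add]
    exact ⟨rfl, rfl⟩
  ext N
  let f (p : {p : N.Partition // T p.parts}) : antidiagonal N :=
    ⟨((p.1.parts.filter q).sum, (p.1.parts.filter (¬ q ·)).sum), by
      rw [HasAntidiagonal.mem_antidiagonal, ← Multiset.sum_add, Multiset.filter_add_not,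
        p.1.parts_sum]⟩
  have fiber (ij : antidiagonal N) : {p // f p = ij} ≃
      {p : ij.1.1.Partition // P p.parts} × {p : ij.1.2.Partition // Q p.parts} :=
  { toFun p :=
      (⟨⟨_, fun hx => p.1.1.parts_pos (Multiset.mem_of_mem_filter hx),
          congrArg (·.1.1) p.2⟩, ((hT _).1 p.1.2).1⟩,
        ⟨⟨_, fun hx => p.1.1.parts_pos (Multiset.mem_of_mem_filter hx),
          congrArg (·.1.2) p.2⟩, ((hT _).1 p.1.2).2⟩)
    invFun yz :=
      have hyz := split_add yz.1.2 yz.2.2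
      ⟨⟨⟨yz.1.1.parts + yz.2.1.parts, fun hx => (Multiset.mem_add.1 hx).elim
            yz.1.1.parts_pos yz.2.1.parts_pos, by
          rw [Multiset.sum_add, yz.1.1.parts_sum, yz.2.1.parts_sum]
          exact HasAntidiagonal.mem_antidiagonal.1 ij.2⟩,
        (hT _).2 (by rw [hyz.1, hyz.2]; exact ⟨yz.1.2, yz.2.2⟩)⟩,
        Subtype.ext <| Prod.ext (by simp only [f, hyz.1, yz.1.1.parts_sum])
          (by simp only [f, hyz.2, yz.2.1.parts_sum])⟩
    left_inv p := Subtype.ext <| Subtype.ext <| Nat.Partition.ext <| Multiset.filter_add_not _ _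
    right_inv yz := Prod.ext (Subtype.ext <| Nat.Partition.ext (split_add yz.1.2 yz.2.2).1)
      (Subtype.ext <| Nat.Partition.ext (split_add yz.1.2 yz.2.2).2) }
  rw [coeff_mul, coeff_genFunOf, Nat.card_congr (Equiv.sigmaFiberEquiv f).symm, Nat.card_sigma,
    Nat.cast_sum, ← Finset.sum_coe_sort (antidiagonal N)]
  refine Finset.sum_congr rfl fun ij _ => ?_
  rw [Nat.card_congr (fiber ij), Nat.card_prod, Nat.cast_mul, coeff_genFunOf, coeff_genFunOf]

lemma genFunOf_forall_mem_and_card_filter_le {A p : ℕ → Prop} [DecidablePred p]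
    (hpA : ∀ x, p x → A x) (b : ℕ) :
    genFunOf R (fun M => (∀ x ∈ M, A x) ∧ Multiset.card (M.filter p) ≤ b) =
      genFunOf R (fun M => (∀ x ∈ M, p x) ∧ Multiset.card M ≤ b) *
        genFunOf R (fun M => ∀ x ∈ M, A x ∧ ¬ p x) := by
  refine genFunOf_eq_mul p (P := fun M => (∀ x ∈ M, p x) ∧ Multiset.card M ≤ b)
    (Q := fun M => ∀ x ∈ M, A x ∧ ¬ p x) (fun M => ?_) (fun M h => h.1)
    (fun M h x hx => (h x hx).2)
  simp only [Multiset.mem_filter]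
  constructor
  · rintro ⟨hM, hb⟩
    exact ⟨⟨fun x hx => hx.2, hb⟩, fun x hx => ⟨hM x hx.1, hx.2⟩⟩
  · rintro ⟨⟨-, hb⟩, hM⟩
    refine ⟨fun x hx => ?_, hb⟩
    by_cases h : p x
    exacts [hpA x h, (hM x ⟨hx, h⟩).1]

lemma genFunOf_card_le (b : ℕ) : genFunOf R (fun M => P M ∧ Multiset.card M ≤ b) =
    ∑ i ∈ range (b + 1), genFunOf R (fun M => P M ∧ Multiset.card M = i) := by
  induction b with
  | zero => simp
  | succ b ih =>
    rw [sum_range_succ, ← ih, genFunOf_eq_add (fun M => Multiset.card M ≤ b)]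
    congr 1 <;>
      exact genFunOf_congr fun M => by rw [and_assoc]; exact and_congr_right' (by omega)

end CommSemiring

section CommRing

variable {R : Type*} [CommRing R]

lemma one_sub_X_pow_mul_genFunOf_forall_eq {s : ℕ} (hs : 0 < s) :
    (1 - X ^ s) * genFunOf R (fun M => ∀ x ∈ M, x = s) = 1 := by
  have h := genFunOf_eq_add (R := R) (P := fun M => ∀ x ∈ M, x = s) (s ∈ ·)
  rw [genFunOf_and_mem hs, genFunOf_eq_one_of_iff_eq_zero (P := fun M => _ ∧ s ∉ M)] at h
  · simp only [Multiset.forall_mem_cons, true_and] at h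
    linear_combination h
  · exact fun M => ⟨fun h => Multiset.eq_zero_of_forall_notMem fun x hx => h.2 (h.1 x hx ▸ hx),
      by rintro rfl; simp⟩

lemma genFunOf_forall_mem_mul_prod (S : Finset ℕ) (hS : 0 ∉ S) :
    genFunOf R (fun M => ∀ x ∈ M, x ∈ S) * ∏ s ∈ S, (1 - X ^ s) = 1 := by
  induction S using Finset.induction_on with
  | empty =>
    rw [genFunOf_eq_one_of_iff_eq_zero fun M => by simp [Multiset.eq_zero_iff_forall_notMem]]
    simp
  | insert s S hs ih =>
    rw [Finset.mem_insert, not_or] at hS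
    rw [genFunOf_eq_mul (· = s) (P := fun M => ∀ x ∈ M, x = s) (Q := fun M => ∀ x ∈ M, x ∈ S)
      (fun M => by simp [Multiset.mem_filter, or_iff_not_imp_left])
      (fun M h => h) (fun M h x hx hxs => hs (hxs ▸ h x hx)), prod_insert hs]
    linear_combination (genFunOf R (fun M => ∀ x ∈ M, x ∈ S) * ∏ s ∈ S, (1 - X ^ s)) *
      one_sub_X_pow_mul_genFunOf_forall_eq (R := R) (Nat.pos_of_ne_zero (Ne.symm hS.1)) + ih hS.2

lemma forall_mem_progression_succ_and_notMem_iff {a e m : ℕ} (he : 0 < e) (M : Multiset ℕ) :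
    (∀ x ∈ M, ∃ j < m + 1, x = a + e * j) ∧ a + e * m ∉ M ↔ ∀ x ∈ M, ∃ j < m, x = a + e * j := by
  constructor
  · rintro ⟨hM, hs⟩ x hx
    obtain ⟨j, hj, rfl⟩ := hM x hx
    refine ⟨j, lt_of_le_of_ne (Nat.le_of_lt_succ hj) ?_, rfl⟩
    rintro rfl
    exact hs hx
  · intro hM
    refine ⟨fun x hx => ?_, fun hs => ?_⟩
    · obtain ⟨j, hj, rfl⟩ := hM x hx
      exact ⟨j, by omega, rfl⟩
    · obtain ⟨j, hj, hsj⟩ := hM _ hs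
      exact hj.ne (Nat.eq_of_mul_eq_mul_left he (Nat.add_left_cancel hsj)).symm

lemma prod_mul_genFunOf_progression {a e : ℕ} (ha : 0 < a) (he : 0 < e) (i m : ℕ) :
    (∏ j ∈ range i, (1 - (X ^ e) ^ (1 + j))) *
        genFunOf R (fun M => (∀ x ∈ M, ∃ j < m, x = a + e * j) ∧ Multiset.card M = i) =
      X ^ (i * a) * ∏ j ∈ range i, (1 - (X ^ e : R⟦X⟧) ^ (m + j)) := by
  induction i generalizing m with
  | zero =>
    rw [genFunOf_eq_one_of_iff_eq_zero fun M =>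
      ⟨fun h => Multiset.card_eq_zero.1 h.2, by rintro rfl; simp⟩]
    simp
  | succ i ih =>
    induction m with
    | zero =>
      rw [genFunOf_eq_zero_of_forall_not, mul_zero, prod_range_succ']
      · simp
      rintro M ⟨hM, hcard⟩
      obtain ⟨x, hx⟩ := Multiset.card_pos_iff_exists_mem.1 (by omega : 0 < Multiset.card M)
      obtain ⟨j, hj, -⟩ := hM x hx
      exact j.not_lt_zero hj
    | succ m ihm =>
      have hcons (M : Multiset ℕ) :
          ((∀ x ∈ (a + e * m) ::ₘ M, ∃ j < m + 1, x = a + e * j) ∧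
              Multiset.card ((a + e * m) ::ₘ M) = i + 1) ↔
            (∀ x ∈ M, ∃ j < m + 1, x = a + e * j) ∧ Multiset.card M = i := by
        simp only [Multiset.forall_mem_cons, Multiset.card_cons, add_left_inj]
        exact ⟨fun h => ⟨h.1.2, h.2⟩, fun h => ⟨⟨⟨m, m.lt_succ_self, rfl⟩, h.1⟩, h.2⟩⟩
      have hnotMem (M : Multiset ℕ) :
          ((∀ x ∈ M, ∃ j < m + 1, x = a + e * j) ∧ Multiset.card M = i + 1) ∧ a + e * m ∉ M ↔
            (∀ x ∈ M, ∃ j < m, x = a + e * j) ∧ Multiset.card M = i + 1 := by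
        rw [_root_.and_right_comm, forall_mem_progression_succ_and_notMem_iff he]
      rw [genFunOf_eq_add (a + e * m ∈ ·), genFunOf_and_mem (by omega), genFunOf_congr hcons,
        genFunOf_congr hnotMem]
      have hshift : ∏ j ∈ range (i + 1), (1 - (X ^ e : R⟦X⟧) ^ (m + j)) =
          (1 - (X ^ e) ^ m) * ∏ j ∈ range i, (1 - (X ^ e) ^ (m + 1 + j)) := by
        rw [prod_range_succ', mul_comm]
        simp only [add_zero, add_assoc, add_comm 1]
      rw [hshift, prod_range_succ] at ihm
      rw [prod_range_succ, prod_range_succ]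
      linear_combination (1 - (X ^ e : R⟦X⟧) ^ (1 + i)) * X ^ a * (X ^ e) ^ m * ih (m + 1) + ihm

lemma constantCoeff_prod_one_sub_X_pow {ι : Type*} (s : Finset ι) {f : ι → ℕ}
    (hf : ∀ i ∈ s, f i ≠ 0) : constantCoeff (∏ i ∈ s, (1 - X ^ f i : R⟦X⟧)) = 1 := by
  rw [map_prod]
  exact prod_eq_one fun i hi => by simp [hf i hi]

end CommRing

section Field

variable {K : Type*} [Field K]

lemma genFunOf_forall_mem_finset (S : Finset ℕ) (hS : 0 ∉ S) :
    genFunOf K (fun M => ∀ x ∈ M, x ∈ S) = (∏ s ∈ S, (1 - X ^ s))⁻¹ := by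
  refine (eq_inv_iff_mul_eq_one ?_).2 (genFunOf_forall_mem_mul_prod S hS)
  rw [constantCoeff_prod_one_sub_X_pow S fun s hs h => hS (h ▸ hs)]
  exact one_ne_zero

lemma genFunOf_progression_card_le {a e : ℕ} (ha : 0 < a) (he : 0 < e) (m b : ℕ) :
    genFunOf K (fun M => (∀ x ∈ M, ∃ j < m, x = a + e * j) ∧ Multiset.card M ≤ b) =
      ∑ i ∈ range (b + 1), X ^ (i * a) * ((∏ j ∈ range i, (1 - (X ^ e) ^ (m + j))) *
        (∏ j ∈ range i, (1 - (X ^ e : K⟦X⟧) ^ (1 + j)))⁻¹) := by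
  rw [genFunOf_card_le]
  refine sum_congr rfl fun i _ => ?_
  have hD : constantCoeff (∏ j ∈ range i, (1 - (X ^ e : K⟦X⟧) ^ (1 + j))) ≠ 0 := by
    simp_rw [← pow_mul]
    rw [constantCoeff_prod_one_sub_X_pow _ fun j _ => by positivity]
    exact one_ne_zero
  rw [← mul_assoc, eq_mul_inv_iff_mul_eq hD, mul_comm]
  exact prod_mul_genFunOf_progression ha he i m

end Field

end Nat.Partition

open Nat.Partition

lemma odd_between_iff {a b n x : ℕ} :
    (Odd x ∧ 2 * a + 1 ≤ x ∧ x ≤ 2 * (n - b) - 1) ↔ ∃ j < n - (a + b), x = 2 * a + 1 + 2 * j := by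
  rw [Nat.odd_iff]
  constructor
  · intro h
    exact ⟨(x - (2 * a + 1)) / 2, by omega, by omega⟩
  · rintro ⟨j, hj, rfl⟩
    omega

lemma mem_odd_image_union_iff {a b n : ℕ} (h : a + b ≤ n) (x : ℕ) :
    x ∈ (range a).image (fun j => 2 * j + 1) ∪ (range b).image (fun j => 2 * n - 1 - 2 * j) ↔
      (Odd x ∧ x ≤ 2 * n - 1) ∧ ¬ ∃ j < n - (a + b), x = 2 * a + 1 + 2 * j := by
  rw [← odd_between_iff]
  simp only [mem_union, mem_image, mem_range, Nat.odd_iff]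
  constructor
  · rintro (⟨j, hj, rfl⟩ | ⟨j, hj, rfl⟩) <;> omega
  · intro hx
    by_cases hsmall : x < 2 * a + 1
    · exact .inl ⟨x / 2, by omega, by omega⟩
    · exact .inr ⟨(2 * n - 1 - x) / 2, by omega, by omega⟩

lemma disjoint_odd_image {a b n : ℕ} (h : a + b ≤ n) :
    Disjoint ((range a).image (fun j => 2 * j + 1))
      ((range b).image (fun j => 2 * n - 1 - 2 * j)) := by
  simp only [disjoint_left, mem_image, mem_range]
  rintro _ ⟨j, hj, rfl⟩ ⟨j', hj', h⟩
  omega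

/-- For `n ≥ k ≥ 0`, let `R_{n,k}` be the set of partitions (multisets) into
odd parts `≤ 2n-1` in which at most `⌊k/2⌋` parts lie in
`{2⌈k/2⌉+1, 2⌈k/2⌉+3, …, 2(n-⌊k/2⌋)-1}`.  Then
`∑_{λ∈R_{n,k}} q^{|λ|} = (∑_{i=0}^{⌊k/2⌋} q^{i(2⌈k/2⌉+1)} [n-k-1+i choose i]_{q²})
  / ((q;q²)_{⌈k/2⌉} · ∏_{i=0}^{⌊k/2⌋-1}(1 - q^{2n-1-2i}))`
as formal power series in `q`, stated coefficientwise, with the Gaussian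
binomial `[a choose b]_{q²} = ((q²)^{a-b+1};q²)_b / (q²;q²)_b`. -/
theorem restricted_odd_partitions_generating_function (n k : ℕ) (hk : k ≤ n) (N : ℕ) :
    (Nat.card {M : Multiset ℕ //
        (∀ x ∈ M, Odd x ∧ x ≤ 2 * n - 1) ∧
        (M.filter (fun x =>
            Odd x ∧ 2 * ((k + 1) / 2) + 1 ≤ x ∧ x ≤ 2 * (n - k / 2) - 1)).card ≤ k / 2 ∧
        M.sum = N} : ℚ) =
      PowerSeries.coeff (R := ℚ) N
        ((∑ i ∈ Finset.range (k / 2 + 1),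
            (PowerSeries.X : PowerSeries ℚ) ^ (i * (2 * ((k + 1) / 2) + 1)) *
            ((∏ j ∈ Finset.range i,
                (1 - ((PowerSeries.X : PowerSeries ℚ) ^ 2) ^ (n - k + j))) *
             (∏ j ∈ Finset.range i,
                (1 - ((PowerSeries.X : PowerSeries ℚ) ^ 2) ^ (1 + j)))⁻¹)) *
         (∏ j ∈ Finset.range ((k + 1) / 2),
            (1 - (PowerSeries.X : PowerSeries ℚ) ^ (2 * j + 1)))⁻¹ *
         (∏ j ∈ Finset.range (k / 2),
            (1 - (PowerSeries.X : PowerSeries ℚ) ^ (2 * n - 1 - 2 * j)))⁻¹) := by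
  set a := (k + 1) / 2
  set b := k / 2
  have hab : a + b = k := by omega
  have hle : a + b ≤ n := by omega
  have hmid (x : ℕ) (hx : Odd x ∧ 2 * a + 1 ≤ x ∧ x ≤ 2 * (n - b) - 1) : Odd x ∧ x ≤ 2 * n - 1 :=
    ⟨hx.1, hx.2.2.trans (by omega)⟩
  simp only [← and_assoc (c := _ = N)]
  rw [← coeff_genFunOf_eq_card_multiset fun M hM x hx => (hM.1 x hx).1.pos,
    genFunOf_forall_mem_and_card_filter_le hmid]
  simp only [odd_between_iff, ← mem_odd_image_union_iff hle]
  rw [hab, genFunOf_progression_card_le (by omega) two_pos,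
    genFunOf_forall_mem_finset _
      fun h => Nat.not_odd_zero ((mem_odd_image_union_iff hle 0).1 h).1.1,
    prod_union (disjoint_odd_image hle), prod_image fun x _ y _ h => by omega,
    prod_image fun x hx y hy h => by simp only [coe_range, Set.mem_Iio] at hx hy; omega,
    PowerSeries.mul_inv_rev]
  ac_rfl
end
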